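/- arXiv:2004.12268 — 7 statements merged into one kernel-verified Lean document; each statement's English description precedes it below -/
import Mathlib

section
/- Let (Ψ_j)_{j≥1} be nonnegative real numbers and let c₀, c₁, c₂, B ≥ 0 be constants. Suppose (𝔸_ν)_{ν∈𝔉}, indexed by finitely supported multi-indices, are nonnegative real numbers satisfying: 𝔸_𝟎 ≤ B; 𝔸_{e_j} ≤ c₀ Ψ_j B for every j ≥ 1; and for every ν with |ν| ≥ 2, 𝔸_ν ≤ c₁ Σ_{j ∈ supp(ν)} ν_j Ψ_j 𝔸_{ν−e_j} + c₂ Σ_{j ∈ supp(ν)} Σ_{ℓ ∈ supp(ν−e_j)} ν_j (ν−e_j)_ℓ Ψ_j Ψ_ℓ 𝔸_{ν−e_j−e_ℓ}. Then for every finitely supported multi-index ν one has 𝔸_ν ≤ |ν|! · (∏_{j≥1} Υ_j^{ν_j}) · B, where Υ_j := C·Ψ_j with C := max{c₀, 2c₁, √(2c₂)}. -/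
/-- Technical recursion lemma (Lemma B.1): if the nonnegative numbers `𝔸ν`, indexed by
finitely supported multi-indices, satisfy the given recursive bounds, then
`𝔸ν ≤ |ν|! ∏_j (C Ψ_j)^{ν_j} B` with `C = max {c₀, 2c₁, √(2c₂)}`. -/
theorem stmt0 (Ψ : ℕ → ℝ) (hΨ : ∀ j, 0 ≤ Ψ j)
    (c0 c1 c2 B : ℝ) (hc0 : 0 ≤ c0) (hc1 : 0 ≤ c1) (hc2 : 0 ≤ c2) (hB : 0 ≤ B)
    (A : (ℕ →₀ ℕ) → ℝ) (hA : ∀ ν, 0 ≤ A ν)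
    (h0 : A 0 ≤ B)
    (h1 : ∀ j : ℕ, A (Finsupp.single j 1) ≤ c0 * Ψ j * B)
    (h2 : ∀ ν : ℕ →₀ ℕ, 2 ≤ ν.sum (fun _ n => n) →
      A ν ≤
        c1 * ∑ j ∈ ν.support, (ν j : ℝ) * Ψ j * A ((ν - Finsupp.single j 1 : ℕ →₀ ℕ))
        + c2 * ∑ j ∈ ν.support, ∑ l ∈ ((ν - Finsupp.single j 1 : ℕ →₀ ℕ)).support,
            (ν j : ℝ) * (((ν - Finsupp.single j 1 : ℕ →₀ ℕ)) l : ℝ) * Ψ j * Ψ l *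
              A ((ν - Finsupp.single j 1 - Finsupp.single l 1 : ℕ →₀ ℕ))) :
    ∀ ν : ℕ →₀ ℕ,
      A ν ≤ (Nat.factorial (ν.sum (fun _ n => n)) : ℝ) *
        (ν.prod fun j n => (max c0 (max (2 * c1) (Real.sqrt (2 * c2))) * Ψ j) ^ n) * B := by
  set C := max c0 (max (2 * c1) (Real.sqrt (2 * c2))) with hCdef
  have hC0 : 0 ≤ C := le_trans hc0 (le_max_left _ _)
  have hc0C : c0 ≤ C := le_max_left _ _
  have hc1C : 2 * c1 ≤ C := le_trans (le_max_left _ _) (le_max_right _ _)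
  have hc2C : 2 * c2 ≤ C ^ 2 := by
    have h1' : Real.sqrt (2 * c2) ^ 2 = 2 * c2 := Real.sq_sqrt (by positivity)
    have h2' : Real.sqrt (2 * c2) ≤ C := le_trans (le_max_right _ _) (le_max_right _ _)
    nlinarith [Real.sqrt_nonneg (2 * c2)]
  -- abbreviations
  have hP : ∀ ν : ℕ →₀ ℕ, 0 ≤ ν.prod fun j n => (C * Ψ j) ^ n := fun ν =>
    Finset.prod_nonneg fun j _ => pow_nonneg (mul_nonneg hC0 (hΨ j)) _
  have key : ∀ (ν : ℕ →₀ ℕ) (j : ℕ), j ∈ ν.support →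
      (ν - Finsupp.single j 1) + Finsupp.single j 1 = ν := by
    intro ν j hj
    exact tsub_add_cancel_of_le (Finsupp.single_le_iff.2
      (Nat.one_le_iff_ne_zero.2 (Finsupp.mem_support_iff.1 hj)))
  have degkey : ∀ (ν : ℕ →₀ ℕ) (j : ℕ), j ∈ ν.support →
      (ν - Finsupp.single j 1).sum (fun _ n => n) + 1 = ν.sum (fun _ n => n) := by
    intro ν j hj
    conv_rhs => rw [← key ν j hj]
    rw [Finsupp.sum_add_index' (fun _ => rfl) (fun _ _ _ => rfl),
      Finsupp.sum_single_index rfl]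
  have prodkey : ∀ (ν : ℕ →₀ ℕ) (j : ℕ), j ∈ ν.support →
      (ν.prod fun i k => (C * Ψ i) ^ k)
        = (C * Ψ j) * ((ν - Finsupp.single j 1).prod fun i k => (C * Ψ i) ^ k) := by
    intro ν j hj
    conv_lhs => rw [← key ν j hj]
    rw [Finsupp.prod_add_index' (fun _ => pow_zero _) (fun _ _ _ => pow_add _ _ _),
      Finsupp.prod_single_index (h := fun i k => (C * Ψ i) ^ k) (pow_zero _), pow_one, mul_comm]
  suffices H : ∀ n : ℕ, ∀ ν : ℕ →₀ ℕ, ν.sum (fun _ n => n) = n →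
      A ν ≤ (Nat.factorial n : ℝ) * (ν.prod fun j k => (C * Ψ j) ^ k) * B by
    intro ν; exact H _ ν rfl
  intro n
  induction n using Nat.strong_induction_on with
  | _ n IH =>
  rcases n with _ | (_ | m)
  · -- n = 0
    intro ν hν
    have hν0 : ν = 0 := by
      rw [Finsupp.sum] at hν
      ext j
      by_cases hj : j ∈ ν.support
      · exact (Finset.sum_eq_zero_iff).1 hν j hj
      · simpa using Finsupp.notMem_support_iff.1 hj
    subst hν0
    simpa [Finsupp.prod_zero_index, Nat.factorial] using h0
  · -- n = 1
    intro ν hν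
    have hsupp : ν.support.Nonempty := by
      by_contra h
      rw [Finset.not_nonempty_iff_eq_empty] at h
      rw [Finsupp.sum, h] at hν
      simp at hν
    obtain ⟨j, hj⟩ := hsupp
    have hj1 : 1 ≤ ν j := Nat.one_le_iff_ne_zero.2 (Finsupp.mem_support_iff.1 hj)
    rw [Finsupp.sum] at hν
    have hνj : ν j ≤ 1 := by
      calc ν j ≤ ∑ i ∈ ν.support, ν i := Finset.single_le_sum (fun _ _ => Nat.zero_le _) hj
      _ = 1 := hν
    have hje : ν = Finsupp.single j 1 := by
      ext k
      rcases eq_or_ne k j with rfl | hk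
      · simp [le_antisymm hνj hj1]
      · rw [Finsupp.single_apply, if_neg (Ne.symm hk)]
        by_contra hk0
        have hkmem : k ∈ ν.support := Finsupp.mem_support_iff.2 hk0
        have hsub : ({j, k} : Finset ℕ) ⊆ ν.support := by
          intro x hx
          rcases Finset.mem_insert.1 hx with rfl | hx
          · exact hj
          · rw [Finset.mem_singleton] at hx; subst hx; exact hkmem
        have hsum2 : ν j + ν k ≤ 1 := by
          calc ν j + ν k = ∑ i ∈ ({j, k} : Finset ℕ), ν i := (Finset.sum_pair (Ne.symm hk)).symm
          _ ≤ ∑ i ∈ ν.support, ν i := Finset.sum_le_sum_of_subset hsub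
          _ = 1 := hν
        omega
    subst hje
    rw [Finsupp.prod_single_index (h := fun i k => (C * Ψ i) ^ k) (pow_zero _), pow_one]
    have : c0 * Ψ j * B ≤ C * Ψ j * B :=
      mul_le_mul_of_nonneg_right (mul_le_mul_of_nonneg_right hc0C (hΨ j)) hB
    calc A (Finsupp.single j 1) ≤ c0 * Ψ j * B := h1 j
    _ ≤ C * Ψ j * B := this
    _ = (Nat.factorial 1 : ℝ) * (C * Ψ j) * B := by norm_num [Nat.factorial]
  · -- n = m + 2
    intro ν hν
    have hdeg2 : 2 ≤ ν.sum (fun _ n => n) := by omega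
    have hrec := h2 ν hdeg2
    -- sum of ν over support equals m+2
    have hsumν : ∑ j ∈ ν.support, (ν j : ℝ) = ((m + 2 : ℕ) : ℝ) := by
      rw [Finsupp.sum] at hν
      exact_mod_cast congrArg (Nat.cast : ℕ → ℝ) hν
    set Pν := ν.prod fun j k => (C * Ψ j) ^ k with hPν
    -- first sum bound
    have hT1 : c1 * ∑ j ∈ ν.support, (ν j : ℝ) * Ψ j * A (ν - Finsupp.single j 1)
        ≤ (1/2) * (Nat.factorial (m + 2) : ℝ) * Pν * B := by
      rw [Finset.mul_sum]
      have hterm : ∀ j ∈ ν.support,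
          c1 * ((ν j : ℝ) * Ψ j * A (ν - Finsupp.single j 1))
            ≤ (ν j : ℝ) * ((1/2) * (Nat.factorial (m + 1) : ℝ) * Pν * B) := by
        intro j hj
        have hdμ : (ν - Finsupp.single j 1).sum (fun _ n => n) = m + 1 := by
          have := degkey ν j hj; omega
        have hAμ : A (ν - Finsupp.single j 1)
            ≤ (Nat.factorial (m + 1) : ℝ)
              * ((ν - Finsupp.single j 1).prod fun i k => (C * Ψ i) ^ k) * B :=
          IH (m + 1) (by omega) _ hdμ
        have hPk := prodkey ν j hj
        set Pμ := (ν - Finsupp.single j 1).prod fun i k => (C * Ψ i) ^ k with hPμ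
        have hPμ0 : 0 ≤ Pμ := hP _
        have hνj0 : (0 : ℝ) ≤ (ν j : ℝ) := Nat.cast_nonneg _
        have step1 : c1 * ((ν j : ℝ) * Ψ j * A (ν - Finsupp.single j 1))
            ≤ c1 * ((ν j : ℝ) * Ψ j * ((Nat.factorial (m + 1) : ℝ) * Pμ * B)) := by
          apply mul_le_mul_of_nonneg_left _ hc1
          apply mul_le_mul_of_nonneg_left hAμ (mul_nonneg hνj0 (hΨ j))
        have step2 : c1 * ((ν j : ℝ) * Ψ j * ((Nat.factorial (m + 1) : ℝ) * Pμ * B))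
            ≤ (ν j : ℝ) * ((1/2) * (Nat.factorial (m + 1) : ℝ) * Pν * B) := by
          rw [hPν, hPk]
          have hx : 0 ≤ Ψ j * Pμ := mul_nonneg (hΨ j) hPμ0
          have hfac : (0:ℝ) ≤ (Nat.factorial (m+1) : ℝ) := Nat.cast_nonneg _
          nlinarith [mul_nonneg (mul_nonneg (mul_nonneg hνj0 hfac) hB) hx,
            mul_nonneg (mul_nonneg hνj0 hfac) hB]
        exact step1.trans step2
      calc ∑ j ∈ ν.support, c1 * ((ν j : ℝ) * Ψ j * A (ν - Finsupp.single j 1))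
          ≤ ∑ j ∈ ν.support, (ν j : ℝ) * ((1/2) * (Nat.factorial (m + 1) : ℝ) * Pν * B) :=
            Finset.sum_le_sum hterm
        _ = (∑ j ∈ ν.support, (ν j : ℝ)) * ((1/2) * (Nat.factorial (m + 1) : ℝ) * Pν * B) := by
            rw [Finset.sum_mul]
        _ = (1/2) * (Nat.factorial (m + 2) : ℝ) * Pν * B := by
            rw [hsumν, Nat.factorial_succ (m+1)]
            push_cast
            ring
    -- second (double) sum bound
    have hT2 : c2 * ∑ j ∈ ν.support, ∑ l ∈ ((ν - Finsupp.single j 1 : ℕ →₀ ℕ)).support,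
            (ν j : ℝ) * (((ν - Finsupp.single j 1 : ℕ →₀ ℕ)) l : ℝ) * Ψ j * Ψ l *
              A ((ν - Finsupp.single j 1 - Finsupp.single l 1 : ℕ →₀ ℕ))
        ≤ (1/2) * (Nat.factorial (m + 2) : ℝ) * Pν * B := by
      rw [Finset.mul_sum]
      have hterm : ∀ j ∈ ν.support,
          c2 * ∑ l ∈ ((ν - Finsupp.single j 1 : ℕ →₀ ℕ)).support,
            (ν j : ℝ) * (((ν - Finsupp.single j 1 : ℕ →₀ ℕ)) l : ℝ) * Ψ j * Ψ l *
              A ((ν - Finsupp.single j 1 - Finsupp.single l 1 : ℕ →₀ ℕ))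
            ≤ (ν j : ℝ)
              * (((m + 1 : ℕ) : ℝ) * ((1/2) * (Nat.factorial m : ℝ) * Pν * B)) := by
        intro j hj
        set μ := (ν - Finsupp.single j 1 : ℕ →₀ ℕ) with hμdef
        have hdμ : μ.sum (fun _ n => n) = m + 1 := by
          have := degkey ν j hj; rw [← hμdef] at this; omega
        have hPk := prodkey ν j hj
        have hsumμ : ∑ l ∈ μ.support, (μ l : ℝ) = ((m + 1 : ℕ) : ℝ) := by
          rw [Finsupp.sum] at hdμ
          exact_mod_cast congrArg (Nat.cast : ℕ → ℝ) hdμ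
        rw [Finset.mul_sum]
        have hterm2 : ∀ l ∈ μ.support,
            c2 * ((ν j : ℝ) * (μ l : ℝ) * Ψ j * Ψ l * A (μ - Finsupp.single l 1))
              ≤ (μ l : ℝ) * ((ν j : ℝ) * ((1/2) * (Nat.factorial m : ℝ) * Pν * B)) := by
          intro l hl
          have hdρ : (μ - Finsupp.single l 1).sum (fun _ n => n) = m := by
            have := degkey μ l hl; omega
          have hAρ : A (μ - Finsupp.single l 1)
              ≤ (Nat.factorial m : ℝ)
                * ((μ - Finsupp.single l 1).prod fun i k => (C * Ψ i) ^ k) * B :=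
            IH m (by omega) _ hdρ
          have hPk2 := prodkey μ l hl
          set Pρ := (μ - Finsupp.single l 1).prod fun i k => (C * Ψ i) ^ k with hPρ
          have hPρ0 : 0 ≤ Pρ := hP _
          have hνj0 : (0 : ℝ) ≤ (ν j : ℝ) := Nat.cast_nonneg _
          have hμl0 : (0 : ℝ) ≤ (μ l : ℝ) := Nat.cast_nonneg _
          have step1 : c2 * ((ν j : ℝ) * (μ l : ℝ) * Ψ j * Ψ l * A (μ - Finsupp.single l 1))
              ≤ c2 * ((ν j : ℝ) * (μ l : ℝ) * Ψ j * Ψ l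
                * ((Nat.factorial m : ℝ) * Pρ * B)) := by
            apply mul_le_mul_of_nonneg_left _ hc2
            apply mul_le_mul_of_nonneg_left hAρ
            exact mul_nonneg (mul_nonneg (mul_nonneg hνj0 hμl0) (hΨ j)) (hΨ l)
          have step2 : c2 * ((ν j : ℝ) * (μ l : ℝ) * Ψ j * Ψ l
                * ((Nat.factorial m : ℝ) * Pρ * B))
              ≤ (μ l : ℝ) * ((ν j : ℝ) * ((1/2) * (Nat.factorial m : ℝ) * Pν * B)) := by
            rw [hPν, hPk, hPk2]
            have hx : 0 ≤ Ψ j * (Ψ l * Pρ) := mul_nonneg (hΨ j) (mul_nonneg (hΨ l) hPρ0)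
            have hfac : (0:ℝ) ≤ (Nat.factorial m : ℝ) := Nat.cast_nonneg _
            nlinarith [mul_nonneg (mul_nonneg (mul_nonneg (mul_nonneg hνj0 hμl0) hfac) hB) hx,
              mul_nonneg (mul_nonneg (mul_nonneg hνj0 hμl0) hfac) hB]
          exact step1.trans step2
        calc ∑ l ∈ μ.support,
              c2 * ((ν j : ℝ) * (μ l : ℝ) * Ψ j * Ψ l * A (μ - Finsupp.single l 1))
            ≤ ∑ l ∈ μ.support,
              (μ l : ℝ) * ((ν j : ℝ) * ((1/2) * (Nat.factorial m : ℝ) * Pν * B)) :=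
              Finset.sum_le_sum hterm2
          _ = (∑ l ∈ μ.support, (μ l : ℝ))
              * ((ν j : ℝ) * ((1/2) * (Nat.factorial m : ℝ) * Pν * B)) := by
              rw [Finset.sum_mul]
          _ = (ν j : ℝ) * (((m + 1 : ℕ) : ℝ) * ((1/2) * (Nat.factorial m : ℝ) * Pν * B)) := by
              rw [hsumμ]; ring
      calc ∑ j ∈ ν.support, c2 * ∑ l ∈ ((ν - Finsupp.single j 1 : ℕ →₀ ℕ)).support,
              (ν j : ℝ) * (((ν - Finsupp.single j 1 : ℕ →₀ ℕ)) l : ℝ) * Ψ j * Ψ l *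
                A ((ν - Finsupp.single j 1 - Finsupp.single l 1 : ℕ →₀ ℕ))
          ≤ ∑ j ∈ ν.support, (ν j : ℝ)
              * (((m + 1 : ℕ) : ℝ) * ((1/2) * (Nat.factorial m : ℝ) * Pν * B)) :=
            Finset.sum_le_sum hterm
        _ = (∑ j ∈ ν.support, (ν j : ℝ))
            * (((m + 1 : ℕ) : ℝ) * ((1/2) * (Nat.factorial m : ℝ) * Pν * B)) := by
            rw [Finset.sum_mul]
        _ = (1/2) * (Nat.factorial (m + 2) : ℝ) * Pν * B := by
            rw [hsumν, Nat.factorial_succ (m+1), Nat.factorial_succ m]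
            push_cast
            ring
    have := hrec.trans (add_le_add hT1 hT2)
    calc A ν ≤ (1/2) * (Nat.factorial (m + 2) : ℝ) * Pν * B
        + (1/2) * (Nat.factorial (m + 2) : ℝ) * Pν * B := this
    _ = (Nat.factorial (m + 2) : ℝ) * Pν * B := by ring
end

section
/- Let (Ψ_j)_{j≥1} be nonnegative real numbers and let c₀, c₁, c₂, B ≥ 0 be constants. Suppose (𝔸_ν)_{ν∈𝔉}, indexed by finitely supported multi-indices, are nonnegative real numbers satisfying: 𝔸_𝟎 ≤ B; 𝔸_{e_j} ≤ c₀ Ψ_j B for every j ≥ 1; and for every ν with |ν| ≥ 2, 𝔸_ν ≤ c₁ Σ_{j ∈ supp(ν)} ν_j Ψ_j 𝔸_{ν−e_j} + c₂ Σ_{j ∈ supp(ν)} Σ_{ℓ ∈ supp(ν−e_j)} ν_j (ν−e_j)_ℓ Ψ_j Ψ_ℓ 𝔸_{ν−e_j−e_ℓ}. Then for every finitely supported multi-index ν one has 𝔸_ν ≤ |ν|! · (∏_{j≥1} (C·Ψ_j)^{ν_j}) · B, where C := max{c₀, (c₁ + √(c₁² + 4c₂))/2}. -/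
/-!
Write `Ψ^ν := ∏_j Ψ_j^{ν_j}` and `C := max {c₀, r}`, where `r` is the larger root of
`x² = c₁ x + c₂`, so that `c₁ C + c₂ ≤ C²`. We prove `𝔸_ν ≤ |ν|! C^{|ν|} B Ψ^ν` by strong
induction on `|ν|`. The recursion is monotone in `𝔸`, and the operator
`𝔸 ↦ Σ_j ν_j Ψ_j 𝔸_{ν-e_j}` sends `Ψ^{ν-e_j}` to `|ν| Ψ^ν`, since `Ψ_j Ψ^{ν-e_j} = Ψ^ν`.
The two terms of the recursion therefore contribute `|ν|! C^{|ν|-2} (c₁ C + c₂) B Ψ^ν`.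
-/

open scoped Nat

namespace Finsupp

variable {α R : Type*}

lemma tsub_single_one_add_single_one {ν : α →₀ ℕ} {j : α} (hj : j ∈ ν.support) :
    ν - single j 1 + single j 1 = ν :=
  tsub_add_cancel_of_le (single_le_iff.2 (Nat.one_le_iff_ne_zero.2 (mem_support_iff.1 hj)))

lemma degree_tsub_single_one_add_one {ν : α →₀ ℕ} {j : α} (hj : j ∈ ν.support) :
    (ν - single j 1).degree + 1 = ν.degree := by
  conv_rhs => rw [← tsub_single_one_add_single_one hj]
  rw [map_add, degree_single]

lemma mul_prod_pow_tsub_single_one [CommMonoid R] (x : α → R) {ν : α →₀ ℕ} {j : α}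
    (hj : j ∈ ν.support) :
    x j * (ν - single j 1).prod (fun i n => x i ^ n) = ν.prod fun i n => x i ^ n := by
  conv_rhs => rw [← tsub_single_one_add_single_one hj]
  rw [prod_add_index' (fun _ => pow_zero _) (fun _ _ _ => pow_add _ _ _),
    prod_single_index (h := fun i n => x i ^ n) (pow_zero (x j)), pow_one, mul_comm]

lemma sum_mul_prod_pow_tsub_single_one [CommSemiring R] (x : α → R) (ν : α →₀ ℕ) :
    ∑ j ∈ ν.support, (ν j : R) * x j * (ν - single j 1).prod (fun i n => x i ^ n)
      = ν.degree * ν.prod fun i n => x i ^ n := by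
  rw [degree_apply, Nat.cast_sum, Finset.sum_mul]
  refine Finset.sum_congr rfl fun j hj => ?_
  rw [mul_assoc, mul_prod_pow_tsub_single_one x hj]

lemma prod_const_mul_pow [CommMonoid R] (c : R) (x : α → R) (ν : α →₀ ℕ) :
    (ν.prod fun i n => (c * x i) ^ n) = c ^ ν.degree * ν.prod fun i n => x i ^ n := by
  simp only [Finsupp.prod, mul_pow, Finset.prod_mul_distrib, Finset.prod_pow_eq_pow_sum,
    degree_apply]

end Finsupp

lemma mul_add_le_sq_of_quadratic_root_le {c1 c2 C : ℝ} (hc2 : 0 ≤ c2)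
    (hC : (c1 + √(c1 ^ 2 + 4 * c2)) / 2 ≤ C) : c1 * C + c2 ≤ C ^ 2 := by
  have hs : √(c1 ^ 2 + 4 * c2) ^ 2 = c1 ^ 2 + 4 * c2 := Real.sq_sqrt (by positivity)
  nlinarith [mul_nonneg (sub_nonneg.2 hC) (Real.sqrt_nonneg (c1 ^ 2 + 4 * c2))]

section PredSum

open Finsupp

variable {α : Type*} {Ψ : α → ℝ}

noncomputable def predSum (Ψ : α → ℝ) (A : (α →₀ ℕ) → ℝ) (ν : α →₀ ℕ) : ℝ :=
  ∑ j ∈ ν.support, (ν j : ℝ) * Ψ j * A (ν - single j 1)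

lemma predSum_predSum (A : (α →₀ ℕ) → ℝ) (ν : α →₀ ℕ) :
    predSum Ψ (predSum Ψ A) ν = ∑ j ∈ ν.support, ∑ l ∈ (ν - single j 1).support,
      (ν j : ℝ) * ((ν - single j 1 : α →₀ ℕ) l : ℝ) * Ψ j * Ψ l *
        A (ν - single j 1 - single l 1) := by
  refine Finset.sum_congr rfl fun j _ => ?_
  rw [predSum, Finset.mul_sum]
  exact Finset.sum_congr rfl fun l _ => by ring

lemma predSum_le_mul_degree_mul_prod (hΨ : ∀ j, 0 ≤ Ψ j) {A : (α →₀ ℕ) → ℝ} {K : ℝ}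
    {ν : α →₀ ℕ}
    (hA : ∀ j ∈ ν.support, A (ν - single j 1) ≤ K * (ν - single j 1).prod fun i n => Ψ i ^ n) :
    predSum Ψ A ν ≤ K * ν.degree * ν.prod fun i n => Ψ i ^ n :=
  calc predSum Ψ A ν
      ≤ ∑ j ∈ ν.support, (ν j : ℝ) * Ψ j * (K * (ν - single j 1).prod fun i n => Ψ i ^ n) :=
        Finset.sum_le_sum fun j hj =>
          mul_le_mul_of_nonneg_left (hA j hj) (mul_nonneg (Nat.cast_nonneg _) (hΨ j))
    _ = K * ∑ j ∈ ν.support, (ν j : ℝ) * Ψ j * (ν - single j 1).prod fun i n => Ψ i ^ n := by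
        rw [Finset.mul_sum]
        exact Finset.sum_congr rfl fun _ _ => by ring
    _ = K * ν.degree * ν.prod fun i n => Ψ i ^ n := by
        rw [sum_mul_prod_pow_tsub_single_one, mul_assoc]

theorem le_factorial_mul_pow_mul_prod_of_le_predSum {c0 c1 c2 B C : ℝ} (hΨ : ∀ j, 0 ≤ Ψ j)
    (hB : 0 ≤ B) (hC : 0 ≤ C) (hc0C : c0 ≤ C) (hc1 : 0 ≤ c1) (hc2 : 0 ≤ c2)
    (hC2 : c1 * C + c2 ≤ C ^ 2) {A : (α →₀ ℕ) → ℝ} (h0 : A 0 ≤ B)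
    (h1 : ∀ j, A (single j 1) ≤ c0 * Ψ j * B)
    (h2 : ∀ ν, 2 ≤ ν.degree → A ν ≤ c1 * predSum Ψ A ν + c2 * predSum Ψ (predSum Ψ A) ν)
    (ν : α →₀ ℕ) :
    A ν ≤ ν.degree ! * C ^ ν.degree * B * ν.prod fun i n => Ψ i ^ n := by
  induction hn : ν.degree using Nat.strong_induction_on generalizing ν with | _ n ih => ?_
  rcases n with _ | _ | n
  · obtain rfl := (degree_eq_zero_iff ν).1 hn
    simpa using h0
  · obtain ⟨j, rfl⟩ : ν ∈ Set.range fun j => single j 1 := by rw [range_single_one]; exact hn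
    have hΨj := hΨ j
    calc A (single j 1) ≤ c0 * Ψ j * B := h1 j
      _ ≤ C * Ψ j * B := by gcongr
      _ = _ := by
        simp only [zero_add, Nat.factorial_one, Nat.cast_one, pow_one, one_mul, pow_zero,
          prod_single_index]
        ring
  · replace hn : ν.degree = n + 2 := hn
    have hP : 0 ≤ ν.prod fun i n => Ψ i ^ n :=
      Finset.prod_nonneg fun i _ => pow_nonneg (hΨ i) _
    have hS1 : predSum Ψ A ν ≤ (n + 1)! * C ^ (n + 1) * B * (n + 2 : ℕ) *
        ν.prod fun i n => Ψ i ^ n := by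
      rw [← hn]
      refine predSum_le_mul_degree_mul_prod hΨ fun j hj => ih _ (by omega) _ ?_
      have := degree_tsub_single_one_add_one hj
      omega
    have hS2 : predSum Ψ (predSum Ψ A) ν ≤ n ! * C ^ n * B * (n + 1 : ℕ) * (n + 2 : ℕ) *
        ν.prod fun i n => Ψ i ^ n := by
      rw [← hn]
      refine predSum_le_mul_degree_mul_prod hΨ fun j hj => ?_
      have hj' := degree_tsub_single_one_add_one hj
      have hμ : (ν - single j 1 : α →₀ ℕ).degree = n + 1 := by omega
      rw [← hμ]
      refine predSum_le_mul_degree_mul_prod hΨ fun l hl => ih _ (by omega) _ ?_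
      have := degree_tsub_single_one_add_one hl
      omega
    calc A ν ≤ c1 * predSum Ψ A ν + c2 * predSum Ψ (predSum Ψ A) ν := h2 ν (by omega)
      _ ≤ c1 * ((n + 1)! * C ^ (n + 1) * B * (n + 2 : ℕ) * ν.prod fun i n => Ψ i ^ n)
          + c2 * (n ! * C ^ n * B * (n + 1 : ℕ) * (n + 2 : ℕ) * ν.prod fun i n => Ψ i ^ n) := by
        gcongr
      _ = (n + 2)! * C ^ n * (c1 * C + c2) * B * ν.prod fun i n => Ψ i ^ n := by
        rw [Nat.factorial_succ (n + 1), Nat.factorial_succ n]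
        push_cast
        ring
      _ ≤ (n + 2)! * C ^ n * C ^ 2 * B * ν.prod fun i n => Ψ i ^ n := by gcongr
      _ = _ := by ring

end PredSum

theorem stmt1_general (Ψ : ℕ → ℝ) (hΨ : ∀ j, 0 ≤ Ψ j)
    (c0 c1 c2 B : ℝ) (hc1 : 0 ≤ c1) (hc2 : 0 ≤ c2) (hB : 0 ≤ B)
    (A : (ℕ →₀ ℕ) → ℝ)
    (h0 : A 0 ≤ B)
    (h1 : ∀ j : ℕ, A (Finsupp.single j 1) ≤ c0 * Ψ j * B)
    (h2 : ∀ ν : ℕ →₀ ℕ, 2 ≤ ν.sum (fun _ n => n) →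
      A ν ≤
        c1 * ∑ j ∈ ν.support, (ν j : ℝ) * Ψ j * A ((ν - Finsupp.single j 1 : ℕ →₀ ℕ))
        + c2 * ∑ j ∈ ν.support, ∑ l ∈ ((ν - Finsupp.single j 1 : ℕ →₀ ℕ)).support,
            (ν j : ℝ) * (((ν - Finsupp.single j 1 : ℕ →₀ ℕ)) l : ℝ) * Ψ j * Ψ l *
              A ((ν - Finsupp.single j 1 - Finsupp.single l 1 : ℕ →₀ ℕ))) :
    ∀ ν : ℕ →₀ ℕ,
      A ν ≤ (Nat.factorial (ν.sum (fun _ n => n)) : ℝ) *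
        (ν.prod fun j n => (max c0 ((c1 + Real.sqrt (c1 ^ 2 + 4 * c2)) / 2) * Ψ j) ^ n) * B := by
  intro ν
  set C := max c0 ((c1 + √(c1 ^ 2 + 4 * c2)) / 2)
  have hroot : (c1 + √(c1 ^ 2 + 4 * c2)) / 2 ≤ C := le_max_right _ _
  have hC : 0 ≤ C := le_trans (by positivity) hroot
  have h2' : ∀ μ : ℕ →₀ ℕ, 2 ≤ μ.degree →
      A μ ≤ c1 * predSum Ψ A μ + c2 * predSum Ψ (predSum Ψ A) μ := fun μ hμ => by
    rw [predSum_predSum]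
    exact h2 μ hμ
  have key := le_factorial_mul_pow_mul_prod_of_le_predSum hΨ hB hC (le_max_left _ _) hc1 hc2
    (mul_add_le_sq_of_quadratic_root_le hc2 hroot) h0 h1 h2' ν
  rw [Finsupp.prod_const_mul_pow]
  change A ν ≤ ν.degree ! * _ * B
  linarith

/-- Technical recursion lemma (Lemma B.1): if the nonnegative numbers `𝔸ν`, indexed by
finitely supported multi-indices, satisfy the given recursive bounds, then
`𝔸ν ≤ |ν|! ∏_j (C Ψ_j)^{ν_j} B` with `C = max {c₀, (c₁+√(c₁²+4c₂))/2}`. -/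
theorem stmt1 (Ψ : ℕ → ℝ) (hΨ : ∀ j, 0 ≤ Ψ j)
    (c0 c1 c2 B : ℝ) (hc0 : 0 ≤ c0) (hc1 : 0 ≤ c1) (hc2 : 0 ≤ c2) (hB : 0 ≤ B)
    (A : (ℕ →₀ ℕ) → ℝ) (hA : ∀ ν, 0 ≤ A ν)
    (h0 : A 0 ≤ B)
    (h1 : ∀ j : ℕ, A (Finsupp.single j 1) ≤ c0 * Ψ j * B)
    (h2 : ∀ ν : ℕ →₀ ℕ, 2 ≤ ν.sum (fun _ n => n) →
      A ν ≤
        c1 * ∑ j ∈ ν.support, (ν j : ℝ) * Ψ j * A ((ν - Finsupp.single j 1 : ℕ →₀ ℕ))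
        + c2 * ∑ j ∈ ν.support, ∑ l ∈ ((ν - Finsupp.single j 1 : ℕ →₀ ℕ)).support,
            (ν j : ℝ) * (((ν - Finsupp.single j 1 : ℕ →₀ ℕ)) l : ℝ) * Ψ j * Ψ l *
              A ((ν - Finsupp.single j 1 - Finsupp.single l 1 : ℕ →₀ ℕ))) :
    ∀ ν : ℕ →₀ ℕ,
      A ν ≤ (Nat.factorial (ν.sum (fun _ n => n)) : ℝ) *
        (ν.prod fun j n => (max c0 ((c1 + Real.sqrt (c1 ^ 2 + 4 * c2)) / 2) * Ψ j) ^ n) * B :=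
  stmt1_general Ψ hΨ c0 c1 c2 B hc1 hc2 hB A h0 h1 h2
end

section
/- Let (b_j)_{j≥1} be a nonincreasing sequence of nonnegative real numbers, and let p ∈ (0,1) be such that Σ_{j≥1} b_j^p < ∞. Then for every integer s ≥ 1, Σ_{j≥s+1} b_j ≤ min(1/(1/p − 1), 1) · (Σ_{j≥1} b_j^p)^{1/p} · s^{−1/p + 1}. -/
/-!
Since `b` is nonincreasing, `(n + 1) b_n^p ≤ S := ∑ b_j^p`, i.e. `b_n ≤ S^{1/p} (n + 1)^{-1/p}`.
Summing this bound over the tail and comparing with `∫_s^∞ x^{-1/p} dx` gives the constant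
`1 / (1/p - 1)`; writing `b_j = b_j^{1-p} b_j^p ≤ b_s^{1-p} b_j^p` on the tail instead gives the
constant `1`.
-/

open Real Set MeasureTheory

theorem Antitone.succ_mul_le_tsum {f : ℕ → ℝ} (hf : Antitone f) (h0 : ∀ n, 0 ≤ f n)
    (hs : Summable f) (n : ℕ) : ((n + 1 : ℕ) : ℝ) * f n ≤ ∑' k, f k :=
  calc ((n + 1 : ℕ) : ℝ) * f n = ∑ _k ∈ Finset.range (n + 1), f n := by simp
    _ ≤ ∑ k ∈ Finset.range (n + 1), f k :=
        Finset.sum_le_sum fun k hk => hf (Nat.lt_succ_iff.mp (Finset.mem_range.mp hk))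
    _ ≤ ∑' k, f k := hs.sum_le_tsum _ fun k _ => h0 k

theorem Antitone.le_tsum_rpow_rpow_mul_rpow_neg {b : ℕ → ℝ} (hb : ∀ n, 0 ≤ b n)
    (hmono : Antitone b) {p : ℝ} (hp : 0 < p) (hsum : Summable fun n => b n ^ p) (n : ℕ) :
    b n ≤ (∑' k, b k ^ p) ^ (1 / p) * ((n + 1 : ℕ) : ℝ) ^ (-(1 / p)) := by
  have hbp : Antitone fun n => b n ^ p := fun m n hmn => rpow_le_rpow (hb n) (hmono hmn) hp.le
  have hn : (0 : ℝ) < (n + 1 : ℕ) := by positivity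
  have hS := hbp.succ_mul_le_tsum (fun n => rpow_nonneg (hb n) p) hsum n
  calc b n = (b n ^ p) ^ (1 / p) := by rw [← rpow_mul (hb n), mul_one_div_cancel hp.ne', rpow_one]
    _ ≤ ((∑' k, b k ^ p) / (n + 1 : ℕ)) ^ (1 / p) := by
        gcongr
        · exact rpow_nonneg (hb n) p
        · rwa [le_div_iff₀ hn, mul_comm]
    _ = _ := by
        rw [div_rpow (tsum_nonneg fun k => rpow_nonneg (hb k) p) hn.le, rpow_neg hn.le,
          div_eq_mul_inv]

theorem tsum_le_rpow_mul_tsum_rpow {ι : Type*} {f : ι → ℝ} {M p : ℝ} (h0 : ∀ i, 0 ≤ f i)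
    (hM : ∀ i, f i ≤ M) (hp1 : p ≤ 1) (hsum : Summable fun i => f i ^ p) :
    ∑' i, f i ≤ M ^ (1 - p) * ∑' i, f i ^ p := by
  have hle : ∀ i, f i ≤ M ^ (1 - p) * f i ^ p := fun i =>
    calc f i = f i ^ (1 - p) * f i ^ p := by
          rw [← rpow_add' (h0 i) (by norm_num), sub_add_cancel, rpow_one]
      _ ≤ M ^ (1 - p) * f i ^ p :=
          mul_le_mul_of_nonneg_right (rpow_le_rpow (h0 i) (hM i) (by linarith))
            (rpow_nonneg (h0 i) p)
  rw [← tsum_mul_left]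
  exact ((hsum.mul_left _).of_nonneg_of_le h0 hle).tsum_le_tsum hle (hsum.mul_left _)

theorem tsum_nat_add_succ_rpow_neg_le {a : ℝ} (ha : 1 < a) {s : ℕ} (hs : 0 < s) :
    ∑' n : ℕ, ((n + s + 1 : ℕ) : ℝ) ^ (-a) ≤ (s : ℝ) ^ (1 - a) / (a - 1) := by
  have hs' : (0 : ℝ) < s := by exact_mod_cast hs
  have anti : AntitoneOn (fun x : ℝ => x ^ (-a)) (Ici (s : ℝ)) := fun x hx y _ hxy =>
    rpow_le_rpow_of_nonpos (hs'.trans_le hx) hxy (by linarith)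
  have h := anti.tsum_comp_add_le_integral s
    (integrableOn_Ioi_rpow_of_lt (by linarith) hs')
    (fun x hx => rpow_nonneg (hs'.trans hx).le _)
  rw [integral_Ioi_rpow_of_lt (by linarith) hs'] at h
  rwa [show -a + 1 = -(a - 1) by ring, neg_div_neg_eq, neg_sub] at h

section AntitoneRpowSummable

variable {b : ℕ → ℝ} {p : ℝ}

theorem Antitone.tsum_nat_add_le_tsum_rpow_rpow_mul_rpow (hb : ∀ n, 0 ≤ b n) (hmono : Antitone b)
    (hp : 0 < p) (hp1 : p ≤ 1) (hsum : Summable fun n => b n ^ p) {s : ℕ} (hs : 0 < s) :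
    ∑' n, b (n + s) ≤ (∑' n, b n ^ p) ^ (1 / p) * (s : ℝ) ^ (-1 / p + 1) := by
  set S := ∑' n, b n ^ p
  have hS : 0 ≤ S := tsum_nonneg fun n => rpow_nonneg (hb n) p
  have hs' : (0 : ℝ) < s := by exact_mod_cast hs
  set c := S ^ (1 / p) * (s : ℝ) ^ (-(1 / p))
  have hc : 0 ≤ c := by positivity
  have hbs : b s ≤ c := by
    refine (hmono.le_tsum_rpow_rpow_mul_rpow_neg hb hp hsum s).trans ?_
    refine mul_le_mul_of_nonneg_left ?_ (rpow_nonneg hS _)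
    exact rpow_le_rpow_of_nonpos hs' (by push_cast; linarith) (by simp [hp.le])
  have hcp : c ^ p * s = S := by
    rw [mul_rpow (by positivity) (by positivity), ← rpow_mul hS, ← rpow_mul hs'.le,
      one_div_mul_cancel hp.ne', neg_mul, one_div_mul_cancel hp.ne', rpow_one, rpow_neg_one,
      mul_assoc, inv_mul_cancel₀ hs'.ne', mul_one]
  have htail : ∑' n, b (n + s) ^ p ≤ S :=
    tsum_comp_le_tsum_of_inj hsum (fun n => rpow_nonneg (hb n) p) (add_left_injective s)
  calc ∑' n, b (n + s) ≤ b s ^ (1 - p) * ∑' n, b (n + s) ^ p :=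
        tsum_le_rpow_mul_tsum_rpow (fun n => hb _) (fun n => hmono (Nat.le_add_left s n)) hp1
          ((summable_nat_add_iff s).2 hsum)
    _ ≤ c ^ (1 - p) * (c ^ p * s) := by
        rw [hcp]
        exact mul_le_mul (rpow_le_rpow (hb s) hbs (sub_nonneg.2 hp1)) htail
          (tsum_nonneg fun n => rpow_nonneg (hb _) p) (rpow_nonneg hc _)
    _ = S ^ (1 / p) * (s : ℝ) ^ (-1 / p + 1) := by
        rw [← mul_assoc, ← rpow_add' hc (by norm_num), sub_add_cancel, rpow_one, mul_assoc,
          ← rpow_add_one hs'.ne', neg_div]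

theorem Antitone.tsum_nat_add_le_div_mul_tsum_rpow_rpow_mul_rpow (hb : ∀ n, 0 ≤ b n)
    (hmono : Antitone b) (hp : 0 < p) (hp1 : p < 1) (hsum : Summable fun n => b n ^ p) {s : ℕ}
    (hs : 0 < s) :
    ∑' n, b (n + s) ≤ 1 / (1 / p - 1) * (∑' n, b n ^ p) ^ (1 / p) * (s : ℝ) ^ (-1 / p + 1) := by
  set S := ∑' n, b n ^ p
  have ha : 1 < 1 / p := one_lt_one_div hp hp1
  have hterm : ∀ n, b (n + s) ≤ S ^ (1 / p) * ((n + s + 1 : ℕ) : ℝ) ^ (-(1 / p)) := fun n =>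
    hmono.le_tsum_rpow_rpow_mul_rpow_neg hb hp hsum (n + s)
  have hsumm : Summable fun n : ℕ => S ^ (1 / p) * ((n + s + 1 : ℕ) : ℝ) ^ (-(1 / p)) :=
    ((summable_nat_add_iff (s + 1)).2 (summable_nat_rpow.2 (by linarith))).mul_left _
  calc ∑' n, b (n + s) ≤ ∑' n : ℕ, S ^ (1 / p) * ((n + s + 1 : ℕ) : ℝ) ^ (-(1 / p)) :=
        (hsumm.of_nonneg_of_le (fun n => hb _) hterm).tsum_le_tsum hterm hsumm
    _ = S ^ (1 / p) * ∑' n : ℕ, ((n + s + 1 : ℕ) : ℝ) ^ (-(1 / p)) := tsum_mul_left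
    _ ≤ S ^ (1 / p) * ((s : ℝ) ^ (1 - 1 / p) / (1 / p - 1)) :=
        mul_le_mul_of_nonneg_left (tsum_nat_add_succ_rpow_neg_le ha hs)
          (rpow_nonneg (tsum_nonneg fun n => rpow_nonneg (hb n) p) _)
    _ = _ := by rw [show 1 - 1 / p = -1 / p + 1 by ring]; ring

end AntitoneRpowSummable

-- `b n` is the paper's `b_{n+1}`, so `∑' n, b (n + s)` is `∑_{j ≥ s+1} b_j`.
/-- Tail-sum bound (from KSS12, Theorem 5.1): for a nonincreasing nonnegative sequence
`b` (here `b n` stands for `b_{n+1}` of the paper) with `∑ b_j^p < ∞`, `0 < p < 1`,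
the tail sum `∑_{j ≥ s+1} b_j` is bounded by
`min(1/(1/p − 1), 1) (∑_{j≥1} b_j^p)^{1/p} s^{−1/p+1}`. -/
theorem stmt2 (b : ℕ → ℝ) (hb : ∀ n, 0 ≤ b n) (hmono : Antitone b)
    (p : ℝ) (hp : 0 < p) (hp1 : p < 1)
    (hsum : Summable fun n => b n ^ p) :
    ∀ s : ℕ, 1 ≤ s →
      (∑' n : ℕ, b (n + s)) ≤
        min (1 / (1 / p - 1)) 1 * (∑' n : ℕ, b n ^ p) ^ (1 / p) * (s : ℝ) ^ (-1 / p + 1) := by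
  intro s hs
  have hS : 0 ≤ (∑' n : ℕ, b n ^ p) ^ (1 / p) :=
    rpow_nonneg (tsum_nonneg fun n => rpow_nonneg (hb n) p) _
  rw [min_mul_of_nonneg _ _ hS, min_mul_of_nonneg _ _ (by positivity), one_mul]
  exact le_min (hmono.tsum_nat_add_le_div_mul_tsum_rpow_rpow_mul_rpow hb hp hp1 hsum hs)
    (hmono.tsum_nat_add_le_tsum_rpow_rpow_mul_rpow hb hp hp1.le hsum hs)
end

section
/- Let s ≥ 1 be an integer, let θ_1, …, θ_s be nonnegative real numbers, and let τ > 0. Then Σ_{𝔲 ⊆ {1,…,s}} ( |𝔲|! · ∏_{j∈𝔲} θ_j )^τ ≤ Σ_{ℓ=0}^{s} (ℓ!)^{τ−1} ( Σ_{j=1}^{s} θ_j^τ )^ℓ, where the outer sum on the left is over all subsets 𝔲 of {1,…,s} (including the empty set, whose term equals 1) and |𝔲| denotes the cardinality of 𝔲. -/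
open Finset

lemma key_fact (s l : ℕ) (x : ℕ → ℝ) (hx : ∀ j, 0 ≤ x j) :
    (Nat.factorial l : ℝ) *
      ∑ u ∈ Finset.powersetCard l (Finset.range s), ∏ j ∈ u, x j
    ≤ (∑ j ∈ Finset.range s, x j) ^ l := by
  classical
  set e : Finset ℕ → (ℕ → ℕ) := fun u i => if i ∈ u then 1 else 0 with he
  rw [Finset.sum_pow_eq_sum_piAntidiag]
  calc (Nat.factorial l : ℝ) * ∑ u ∈ Finset.powersetCard l (Finset.range s), ∏ j ∈ u, x j
      = ∑ u ∈ Finset.powersetCard l (Finset.range s),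
          (Nat.multinomial (Finset.range s) (e u) : ℝ) *
            ∏ i ∈ Finset.range s, x i ^ e u i := by
        rw [Finset.mul_sum]
        refine Finset.sum_congr rfl fun u hu => ?_
        obtain ⟨hsub, hcard⟩ := Finset.mem_powersetCard.1 hu
        have hmul : Nat.multinomial (Finset.range s) (e u) = Nat.factorial l := by
          unfold Nat.multinomial
          have h1 : ∏ i ∈ Finset.range s, Nat.factorial (e u i) = 1 := by
            apply Finset.prod_eq_one
            intro i _
            simp only [he]
            split <;> simp
          have h2 : ∑ i ∈ Finset.range s, e u i = l := by
            rw [← hcard]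
            rw [Finset.sum_ite_mem]
            simp [Finset.inter_eq_right.2 hsub]
          rw [h1, h2, Nat.div_one]
        have hprod : ∏ i ∈ Finset.range s, x i ^ e u i = ∏ j ∈ u, x j := by
          rw [← Finset.prod_subset hsub (fun i _ hi => by simp [he, hi])]
          refine Finset.prod_congr rfl fun i hi => by simp [he, hi]
        rw [hmul, hprod]
    _ = ∑ k ∈ (Finset.powersetCard l (Finset.range s)).image e,
          (Nat.multinomial (Finset.range s) k : ℝ) * ∏ i ∈ Finset.range s, x i ^ k i := by
        rw [Finset.sum_image]
        intro u hu v hv huv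
        obtain ⟨hsubu, _⟩ := Finset.mem_powersetCard.1 hu
        obtain ⟨hsubv, _⟩ := Finset.mem_powersetCard.1 hv
        ext i
        have := congrFun huv i
        simp only [he] at this
        constructor <;> intro hi
        · by_contra h; simp [hi, h] at this
        · by_contra h; simp [hi, h] at this
    _ ≤ ∑ k ∈ Finset.piAntidiag (Finset.range s) l,
          (Nat.multinomial (Finset.range s) k : ℝ) * ∏ i ∈ Finset.range s, x i ^ k i := by
        apply Finset.sum_le_sum_of_subset_of_nonneg
        · intro k hk
          obtain ⟨u, hu, rfl⟩ := Finset.mem_image.1 hk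
          obtain ⟨hsub, hcard⟩ := Finset.mem_powersetCard.1 hu
          rw [Finset.mem_piAntidiag]
          constructor
          · rw [← hcard, Finset.sum_ite_mem]
            simp [Finset.inter_eq_right.2 hsub]
          · intro i hi
            simp only [he] at hi
            by_contra h
            apply hi
            have : i ∉ u := fun hiu => h (hsub hiu)
            simp [this]
        · intro k _ _
          exact mul_nonneg (Nat.cast_nonneg _)
            (Finset.prod_nonneg fun i _ => pow_nonneg (hx i) _)

/-- Combinatorial estimate: for nonnegative `θ_1, …, θ_s` and `τ > 0`,
`∑_{𝔲 ⊆ {1:s}} (|𝔲|! ∏_{j∈𝔲} θ_j)^τ ≤ ∑_{ℓ=0}^s (ℓ!)^{τ−1} (∑_{j=1}^s θ_j^τ)^ℓ`.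
Here `{1,…,s}` is modelled by `Finset.range s`. -/
theorem stmt4 (s : ℕ) (hs : 1 ≤ s) (θ : ℕ → ℝ) (hθ : ∀ j, 0 ≤ θ j)
    (τ : ℝ) (hτ : 0 < τ) :
    ∑ u ∈ (Finset.range s).powerset,
        ((Nat.factorial u.card : ℝ) * ∏ j ∈ u, θ j) ^ τ
      ≤ ∑ l ∈ Finset.range (s + 1),
          (Nat.factorial l : ℝ) ^ (τ - 1) * (∑ j ∈ Finset.range s, θ j ^ τ) ^ l := by
  classical
  have hrange : (Finset.range s).card = s := Finset.card_range s
  rw [Finset.sum_powerset, hrange]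
  apply Finset.sum_le_sum
  intro l _
  have hfac : (0 : ℝ) < (Nat.factorial l : ℝ) := by positivity
  have hstep : ∑ u ∈ Finset.powersetCard l (Finset.range s),
      ((Nat.factorial u.card : ℝ) * ∏ j ∈ u, θ j) ^ τ
      = (Nat.factorial l : ℝ) ^ τ *
        ∑ u ∈ Finset.powersetCard l (Finset.range s), ∏ j ∈ u, θ j ^ τ := by
    rw [Finset.mul_sum]
    refine Finset.sum_congr rfl fun u hu => ?_
    obtain ⟨hsub, hcard⟩ := Finset.mem_powersetCard.1 hu
    rw [hcard, Real.mul_rpow (Nat.cast_nonneg _)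
      (Finset.prod_nonneg fun j _ => hθ j)]
    congr 1
    rw [← Real.finset_prod_rpow u θ (fun j _ => hθ j) τ]
  rw [hstep]
  have hτsplit : (Nat.factorial l : ℝ) ^ τ
      = (Nat.factorial l : ℝ) ^ (τ - 1) * (Nat.factorial l : ℝ) := by
    have h1 : (Nat.factorial l : ℝ) ^ (τ - 1) * (Nat.factorial l : ℝ)
        = (Nat.factorial l : ℝ) ^ (τ - 1) * (Nat.factorial l : ℝ) ^ (1 : ℝ) := by
      rw [Real.rpow_one]
    rw [h1, ← Real.rpow_add hfac]
    norm_num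
  rw [hτsplit, mul_assoc]
  apply mul_le_mul_of_nonneg_left _ (Real.rpow_nonneg (Nat.cast_nonneg _) _)
  exact key_fact s l (fun j => θ j ^ τ) (fun j => Real.rpow_nonneg (hθ j) τ)
end

section
/- Let (θ_j)_{j≥1} be nonnegative real numbers and let τ ∈ (0,1) be such that Σ_{j≥1} θ_j^τ < ∞. Then there exists a constant M < ∞, independent of s, such that for every integer s ≥ 1, Σ_{𝔲 ⊆ {1,…,s}} ( |𝔲|! · ∏_{j∈𝔲} θ_j )^τ ≤ M. -/
open Finset


lemma key_step (f : ℕ → ℝ) (hf : ∀ j, 0 ≤ f j) (s : Finset ℕ) (k : ℕ) :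
    ((k+1 : ℕ) : ℝ) * ∑ v ∈ s.powersetCard (k+1), ∏ j ∈ v, f j ≤
      (∑ j ∈ s, f j) * ∑ u ∈ s.powersetCard k, ∏ j ∈ u, f j := by
  have lhs_eq : ((k+1 : ℕ) : ℝ) * ∑ v ∈ s.powersetCard (k+1), ∏ j ∈ v, f j
      = ∑ p ∈ (s.powersetCard (k+1)).sigma (fun v => v),
          f p.2 * ∏ i ∈ p.1.erase p.2, f i := by
    rw [Finset.mul_sum, Finset.sum_sigma]
    refine Finset.sum_congr rfl fun v hv => ?_
    have hcard : v.card = k+1 := (Finset.mem_powersetCard.1 hv).2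
    calc ((k+1:ℕ):ℝ) * ∏ j ∈ v, f j = ∑ j ∈ v, ∏ i ∈ v, f i := by
          rw [Finset.sum_const, nsmul_eq_mul, hcard]
      _ = ∑ j ∈ v, f j * ∏ i ∈ v.erase j, f i := by
          refine Finset.sum_congr rfl fun j hj => ?_
          rw [Finset.mul_prod_erase v f hj]
  rw [lhs_eq, Finset.sum_mul_sum]
  have himg : ∀ p ∈ (s.powersetCard (k+1)).sigma (fun v => v),
      (p.2, p.1.erase p.2) ∈ s ×ˢ s.powersetCard k := by
    rintro ⟨v, j⟩ hp
    simp only [Finset.mem_sigma, Finset.mem_powersetCard] at hp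
    obtain ⟨⟨hvs, hvc⟩, hjv⟩ := hp
    refine Finset.mem_product.2 ⟨hvs hjv, Finset.mem_powersetCard.2
      ⟨(Finset.erase_subset _ _).trans hvs, ?_⟩⟩
    rw [Finset.card_erase_of_mem hjv, hvc]; omega
  have hinj : ∀ p ∈ (s.powersetCard (k+1)).sigma (fun v => v),
      ∀ q ∈ (s.powersetCard (k+1)).sigma (fun v => v),
      (p.2, p.1.erase p.2) = (q.2, q.1.erase q.2) → p = q := by
    rintro ⟨v, j⟩ hp ⟨w, i⟩ hq h
    simp only [Prod.mk.injEq] at h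
    obtain ⟨h1, h2⟩ := h
    subst h1
    simp only [Finset.mem_sigma] at hp hq
    have : v = w := by
      rw [← Finset.insert_erase hp.2, h2, Finset.insert_erase hq.2]
    subst this; rfl
  calc ∑ p ∈ (s.powersetCard (k+1)).sigma (fun v => v),
          f p.2 * ∏ i ∈ p.1.erase p.2, f i
      = ∑ q ∈ ((s.powersetCard (k+1)).sigma (fun v => v)).image
            (fun p => (p.2, p.1.erase p.2)), f q.1 * ∏ i ∈ q.2, f i := by
        rw [Finset.sum_image hinj]
    _ ≤ ∑ q ∈ s ×ˢ s.powersetCard k, f q.1 * ∏ i ∈ q.2, f i := by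
        refine Finset.sum_le_sum_of_subset_of_nonneg ?_ fun q _ _ => ?_
        · intro q hq
          obtain ⟨p, hp, rfl⟩ := Finset.mem_image.1 hq
          exact himg p hp
        · exact mul_nonneg (hf _) (Finset.prod_nonneg fun i _ => hf i)
    _ = ∑ j ∈ s, ∑ u ∈ s.powersetCard k, f j * ∏ i ∈ u, f i := by
        rw [Finset.sum_product]

lemma key (f : ℕ → ℝ) (hf : ∀ j, 0 ≤ f j) (s : Finset ℕ) (k : ℕ) :
    ((k.factorial : ℕ) : ℝ) * ∑ u ∈ s.powersetCard k, ∏ j ∈ u, f j ≤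
      (∑ j ∈ s, f j) ^ k := by
  induction k with
  | zero => simp
  | succ k ih =>
    have hS : (0:ℝ) ≤ ∑ j ∈ s, f j := Finset.sum_nonneg fun j _ => hf j
    have hfac : (0:ℝ) ≤ (k.factorial : ℝ) := by positivity
    calc (((k+1).factorial : ℕ) : ℝ) * ∑ v ∈ s.powersetCard (k+1), ∏ j ∈ v, f j
        = (k.factorial : ℝ) * (((k+1:ℕ):ℝ) * ∑ v ∈ s.powersetCard (k+1), ∏ j ∈ v, f j) := by
          rw [Nat.factorial_succ]; push_cast; ring
      _ ≤ (k.factorial : ℝ) * ((∑ j ∈ s, f j) * ∑ u ∈ s.powersetCard k, ∏ j ∈ u, f j) := by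
          exact mul_le_mul_of_nonneg_left (key_step f hf s k) hfac
      _ = (∑ j ∈ s, f j) * ((k.factorial : ℝ) * ∑ u ∈ s.powersetCard k, ∏ j ∈ u, f j) := by ring
      _ ≤ (∑ j ∈ s, f j) * (∑ j ∈ s, f j) ^ k := mul_le_mul_of_nonneg_left ih hS
      _ = (∑ j ∈ s, f j) ^ (k+1) := by ring



/-- If `∑_j θ_j^τ < ∞` with `τ ∈ (0,1)` and `θ_j ≥ 0`, then the sums
`∑_{𝔲 ⊆ {1:s}} (|𝔲|! ∏_{j∈𝔲} θ_j)^τ` are bounded uniformly in `s`.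
Here `{1,…,s}` is modelled by `Finset.range s`. -/
theorem stmt6 (θ : ℕ → ℝ) (hθ : ∀ j, 0 ≤ θ j)
    (τ : ℝ) (hτ0 : 0 < τ) (hτ1 : τ < 1)
    (hsum : Summable fun j => θ j ^ τ) :
    ∃ M : ℝ, ∀ s : ℕ, 1 ≤ s →
      ∑ u ∈ (Finset.range s).powerset,
          ((Nat.factorial u.card : ℝ) * ∏ j ∈ u, θ j) ^ τ ≤ M := by
  set t : ℕ → ℝ := fun j => θ j ^ τ with ht
  have htn : ∀ j, 0 ≤ t j := fun j => Real.rpow_nonneg (hθ j) τ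
  set A : ℝ := ∑' j, t j with hA
  have hA0 : 0 ≤ A := tsum_nonneg htn
  set c : ℕ → ℝ := fun k => ((k.factorial : ℕ) : ℝ) ^ (τ - 1) * A ^ k with hc
  have hcn : ∀ k, 0 ≤ c k := fun k =>
    mul_nonneg (Real.rpow_nonneg (by positivity) _) (pow_nonneg hA0 k)
  -- summability of c via ratio test
  have hratio : Filter.Tendsto (fun n : ℕ => A * ((n : ℝ) + 1) ^ (τ - 1))
      Filter.atTop (nhds 0) := by
    have h1 : Filter.Tendsto (fun x : ℝ => x ^ (τ - 1)) Filter.atTop (nhds 0) := by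
      have := tendsto_rpow_neg_atTop (show (0:ℝ) < 1 - τ by linarith)
      rwa [neg_sub] at this
    have h2 : Filter.Tendsto (fun n : ℕ => (n : ℝ) + 1) Filter.atTop Filter.atTop :=
      Filter.tendsto_atTop_add_const_right _ 1 tendsto_natCast_atTop_atTop
    have := (h1.comp h2).const_mul A
    simpa using this
  have hev : ∀ᶠ n : ℕ in Filter.atTop, A * ((n : ℝ) + 1) ^ (τ - 1) ≤ 1/2 := by
    filter_upwards [hratio.eventually_lt_const (by norm_num : (0:ℝ) < 1/2)] with n hn
    exact le_of_lt hn
  have hsc : Summable c := by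
    refine summable_of_ratio_norm_eventually_le (r := 1/2) (by norm_num) ?_
    filter_upwards [hev] with n hn
    rw [Real.norm_of_nonneg (hcn _), Real.norm_of_nonneg (hcn _)]
    have hfpos : (0:ℝ) < ((n.factorial : ℕ) : ℝ) := by positivity
    have heq : c (n+1) = (A * ((n:ℝ)+1) ^ (τ-1)) * c n := by
      simp only [hc, Nat.factorial_succ]
      rw [show (((n+1) * n.factorial : ℕ) : ℝ) = ((n:ℝ)+1) * ((n.factorial : ℕ) : ℝ) by
        push_cast; ring, Real.mul_rpow (by positivity) hfpos.le]
      ring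
    rw [heq]
    exact mul_le_mul_of_nonneg_right hn (hcn n)
  refine ⟨∑' k, c k, fun s _ => ?_⟩
  -- rewrite each term
  have hterm : ∀ u : Finset ℕ,
      ((Nat.factorial u.card : ℝ) * ∏ j ∈ u, θ j) ^ τ
        = ((u.card.factorial : ℕ) : ℝ) ^ τ * ∏ j ∈ u, t j := by
    intro u
    rw [Real.mul_rpow (by positivity) (Finset.prod_nonneg fun j _ => hθ j),
      ← Real.finset_prod_rpow _ _ (fun j _ => hθ j)]
  calc ∑ u ∈ (Finset.range s).powerset,
          ((Nat.factorial u.card : ℝ) * ∏ j ∈ u, θ j) ^ τ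
      = ∑ u ∈ (Finset.range s).powerset,
          ((u.card.factorial : ℕ) : ℝ) ^ τ * ∏ j ∈ u, t j := by
        exact Finset.sum_congr rfl fun u _ => hterm u
    _ = ∑ k ∈ Finset.range (s+1), ∑ u ∈ (Finset.range s).powersetCard k,
          ((u.card.factorial : ℕ) : ℝ) ^ τ * ∏ j ∈ u, t j := by
        rw [Finset.sum_powerset]; simp
    _ ≤ ∑ k ∈ Finset.range (s+1), c k := by
        refine Finset.sum_le_sum fun k _ => ?_
        have hfpos : (0:ℝ) < ((k.factorial : ℕ) : ℝ) := by positivity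
        have hrw : ∑ u ∈ (Finset.range s).powersetCard k,
            ((u.card.factorial : ℕ) : ℝ) ^ τ * ∏ j ∈ u, t j
            = ((k.factorial : ℕ) : ℝ) ^ τ
              * ∑ u ∈ (Finset.range s).powersetCard k, ∏ j ∈ u, t j := by
          rw [Finset.mul_sum]
          refine Finset.sum_congr rfl fun u hu => ?_
          rw [(Finset.mem_powersetCard.1 hu).2]
        rw [hrw]
        have hfac : ((k.factorial : ℕ) : ℝ) ^ τ
            = ((k.factorial : ℕ) : ℝ) ^ (τ - 1) * ((k.factorial : ℕ) : ℝ) := by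
          rw [Real.rpow_sub hfpos, Real.rpow_one]; field_simp
        rw [hfac, mul_assoc]
        have hS : ∑ j ∈ Finset.range s, t j ≤ A :=
          Summable.sum_le_tsum _ (fun j _ => htn j) hsum
        have hS0 : (0:ℝ) ≤ ∑ j ∈ Finset.range s, t j :=
          Finset.sum_nonneg fun j _ => htn j
        refine mul_le_mul_of_nonneg_left ?_ (Real.rpow_nonneg hfpos.le _)
        calc ((k.factorial : ℕ) : ℝ)
              * ∑ u ∈ (Finset.range s).powersetCard k, ∏ j ∈ u, t j
            ≤ (∑ j ∈ Finset.range s, t j) ^ k := key t htn _ k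
          _ ≤ A ^ k := pow_le_pow_left₀ hS0 hS k
    _ ≤ ∑' k, c k := Summable.sum_le_tsum _ (fun k _ => hcn k) hsc
end

section
/- Let p ∈ (0,1) and K > 0. Let (b_j)_{j≥1} be a nonincreasing sequence of nonnegative real numbers with Σ_{j≥1} b_j^p ≤ K. Then there exists a constant C, depending only on p and K (and in particular independent of the sequence and of s), such that for every integer s ≥ 1 with Σ_{j≥s+1} b_j ≤ 1/2, one has Σ_{ℓ'=1}^{∞} Σ_ν ( (2ℓ')! / ∏_{j≥1} ν_j! ) ∏_{j≥1} b_j^{ν_j} ≤ C · s^{−2/p + 1}, where the inner sum is over all finitely supported multi-indices ν with |ν| = 2ℓ', ν_j = 0 for all j ≤ s, and ν_j even for all j ≥ s+1. -/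
/-!
An even multi-index `ν` with `|ν| = 2ℓ + 2` is `ρ + 2 e_j` for some `j` in its support, the pair
`(j, ρ)` determines `ν`, and `(2ℓ+2)!/ν! ≤ (2ℓ+2)² (2ℓ)!/ρ!`. Hence, by the multinomial theorem,
the `ℓ`-th inner sum is at most
`(2ℓ+2)² (∑_{j>s} b_j²) (∑_{j>s} b_j)^{2ℓ} ≤ (2ℓ+2)² 4^{-ℓ} ∑_{j>s} b_j²`, and
`∑_ℓ (2ℓ+2)² 4^{-ℓ} < ∞`. Monotonicity gives `s b_s^p ≤ ∑_j b_j^p ≤ K`, so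
`∑_{j>s} b_j² ≤ b_s^{2-p} ∑_j b_j^p ≤ (K/s)^{(2-p)/p} K = K^{2/p} s^{1-2/p}`.
-/

open Finset Nat

lemma Finset.sum_mul_le_sum_image_mul_sum_image {ι κ η R : Type*} [DecidableEq κ]
    [DecidableEq η] [CommSemiring R] [PartialOrder R] [IsOrderedRing R] {s : Finset ι}
    {f : ι → κ} {g : ι → η} (hinj : Set.InjOn (fun i => (f i, g i)) s) {u : κ → R} {v : η → R}
    (hu : ∀ k, 0 ≤ u k) (hv : ∀ l, 0 ≤ v l) :
    ∑ i ∈ s, u (f i) * v (g i) ≤ (∑ k ∈ s.image f, u k) * ∑ l ∈ s.image g, v l := by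
  calc ∑ i ∈ s, u (f i) * v (g i)
      = ∑ q ∈ s.image fun i => (f i, g i), u q.1 * v q.2 :=
        (sum_image (f := fun q => u q.1 * v q.2) hinj).symm
    _ ≤ ∑ q ∈ s.image f ×ˢ s.image g, u q.1 * v q.2 := by
        refine sum_le_sum_of_subset_of_nonneg ?_ fun q _ _ => mul_nonneg (hu q.1) (hv q.2)
        intro q hq
        obtain ⟨i, hi, rfl⟩ := mem_image.1 hq
        exact mem_product.2 ⟨mem_image_of_mem f hi, mem_image_of_mem g hi⟩
    _ = _ := by rw [sum_product, sum_mul_sum]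

section Multinomial

variable {α : Type*} {b : α → ℝ}

noncomputable def multinomialTerm (b : α → ℝ) (n : ℕ) (ν : α →₀ ℕ) : ℝ :=
  (n ! : ℝ) / (ν.prod fun _ k => (k ! : ℝ)) * ν.prod fun j k => b j ^ k

lemma multinomialTerm_nonneg (hb : ∀ j, 0 ≤ b j) (n : ℕ) (ν : α →₀ ℕ) :
    0 ≤ multinomialTerm b n ν :=
  mul_nonneg (div_nonneg (by positivity) (prod_nonneg fun _ _ => by positivity))
    (prod_nonneg fun j _ => pow_nonneg (hb j) _)

lemma multinomialTerm_eq_multinomial_mul_prod {n : ℕ} {ν : α →₀ ℕ} {F : Finset α}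
    (hνF : ν.support ⊆ F) (hn : ∑ i ∈ F, ν i = n) :
    multinomialTerm b n ν = Nat.multinomial F ν * ∏ i ∈ F, b i ^ ν i := by
  rw [multinomialTerm, Finsupp.prod_of_support_subset ν hνF _ (fun _ _ => by simp),
    Finsupp.prod_of_support_subset ν hνF _ (fun _ _ => by simp), Nat.multinomial, hn,
    Nat.cast_div (hn ▸ prod_factorial_dvd_factorial_sum F ν) (by positivity)]
  push_cast
  rfl

lemma sum_multinomialTerm_le_pow (hb : ∀ j, 0 ≤ b j) {S : Set α} {T : ℝ}
    (hT : ∀ F : Finset α, ↑F ⊆ S → ∑ j ∈ F, b j ≤ T) {n : ℕ} {G : Finset (α →₀ ℕ)}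
    (hG : ∀ ρ ∈ G, ρ.degree = n ∧ ↑ρ.support ⊆ S) :
    ∑ ρ ∈ G, multinomialTerm b n ρ ≤ T ^ n := by
  classical
  set F := G.sup Finsupp.support
  have hsupp : ∀ ρ ∈ G, ρ.support ⊆ F := fun ρ hρ => le_sup hρ
  have hFS : ↑F ⊆ S := by
    intro j hj
    obtain ⟨ρ, hρ, hjρ⟩ := mem_sup.1 hj
    exact (hG ρ hρ).2 hjρ
  have hsum : ∀ ρ ∈ G, ∑ i ∈ F, ρ i = n := fun ρ hρ =>
    (sum_subset (hsupp ρ hρ) fun _ _ h => Finsupp.notMem_support_iff.1 h).symm.trans (hG ρ hρ).1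
  calc ∑ ρ ∈ G, multinomialTerm b n ρ
      = ∑ k ∈ G.image (⇑), (Nat.multinomial F k : ℝ) * ∏ i ∈ F, b i ^ k i := by
        rw [sum_image fun _ _ _ _ h => DFunLike.coe_injective h]
        exact sum_congr rfl fun ρ hρ =>
          multinomialTerm_eq_multinomial_mul_prod (hsupp ρ hρ) (hsum ρ hρ)
    _ ≤ ∑ k ∈ piAntidiag F n, (Nat.multinomial F k : ℝ) * ∏ i ∈ F, b i ^ k i := by
        refine sum_le_sum_of_subset_of_nonneg ?_ fun k _ _ =>
          mul_nonneg (Nat.cast_nonneg _) (prod_nonneg fun i _ => pow_nonneg (hb i) _)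
        intro k hk
        obtain ⟨ρ, hρ, rfl⟩ := mem_image.1 hk
        exact mem_piAntidiag.2 ⟨hsum ρ hρ, fun i hi => hsupp ρ hρ (Finsupp.mem_support_iff.2 hi)⟩
    _ = (∑ i ∈ F, b i) ^ n := (sum_pow_eq_sum_piAntidiag F b n).symm
    _ ≤ T ^ n := pow_le_pow_left₀ (sum_nonneg fun i _ => hb i) (hT F hFS) n

lemma prod_factorial_le_of_le {ρ ν : α →₀ ℕ} (h : ρ ≤ ν) :
    (ρ.prod fun _ k => (k ! : ℝ)) ≤ ν.prod fun _ k => (k ! : ℝ) := by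
  rw [Finsupp.prod_of_support_subset ρ (Finsupp.support_mono h) _ (fun _ _ => by simp),
    Finsupp.prod]
  exact prod_le_prod (fun _ _ => by positivity) fun i _ => by exact_mod_cast factorial_le (h i)

lemma multinomialTerm_add_single_two_le (hb : ∀ j, 0 ≤ b j) (n : ℕ)
    (ρ : α →₀ ℕ) (j : α) :
    multinomialTerm b (n + 2) (ρ + Finsupp.single j 2) ≤
      ((n : ℝ) + 2) ^ 2 * (b j ^ 2 * multinomialTerm b n ρ) := by
  have hprod : ((ρ + Finsupp.single j 2).prod fun i k => b i ^ k) =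
      (ρ.prod fun i k => b i ^ k) * b j ^ 2 := by
    rw [Finsupp.prod_add_index' (fun _ => pow_zero _) (fun _ _ _ => pow_add _ _ _),
      Finsupp.prod_single_index (h := fun i k => b i ^ k) (pow_zero _)]
  have hfact : ((n + 2)! : ℝ) ≤ ((n : ℝ) + 2) ^ 2 * n ! := by
    rw [factorial_succ, factorial_succ]
    push_cast
    nlinarith [show (0 : ℝ) ≤ ((n : ℝ) + 2) * (n ! : ℝ) by positivity]
  have hP : 0 < ρ.prod fun _ k => (k ! : ℝ) := prod_pos fun _ _ => by positivity
  have hR : 0 ≤ ρ.prod fun i k => b i ^ k := prod_nonneg fun i _ => pow_nonneg (hb i) _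
  calc multinomialTerm b (n + 2) (ρ + Finsupp.single j 2)
      ≤ ((n : ℝ) + 2) ^ 2 * n ! / (ρ.prod fun _ k => (k ! : ℝ)) *
          ((ρ.prod fun i k => b i ^ k) * b j ^ 2) := by
        rw [multinomialTerm, hprod]
        gcongr
        exact prod_factorial_le_of_le le_self_add
    _ = ((n : ℝ) + 2) ^ 2 * (b j ^ 2 * multinomialTerm b n ρ) := by
        rw [multinomialTerm]
        ring

lemma Finsupp.exists_eq_add_single_two {ν : α →₀ ℕ} (hν : ν ≠ 0)
    (heven : ∀ j, Even (ν j)) : ∃ j ∈ ν.support, ∃ ρ, ν = ρ + Finsupp.single j 2 := by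
  obtain ⟨j, hj⟩ := Finsupp.support_nonempty_iff.2 hν
  have h2 : 2 ≤ ν j := by
    obtain ⟨m, hm⟩ := heven j
    have := Finsupp.mem_support_iff.1 hj
    omega
  exact ⟨j, hj, ν - Finsupp.single j 2, (tsub_add_cancel_of_le (Finsupp.single_le_iff.2 h2)).symm⟩

lemma sum_even_multinomialTerm_le (hb : ∀ j, 0 ≤ b j) {S : Set α} {T B : ℝ}
    (hT : ∀ F : Finset α, ↑F ⊆ S → ∑ j ∈ F, b j ≤ T)
    (hB : ∀ F : Finset α, ↑F ⊆ S → ∑ j ∈ F, b j ^ 2 ≤ B) {n : ℕ} {G : Finset (α →₀ ℕ)}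
    (hG : ∀ ν ∈ G, ν.degree = n + 2 ∧ ↑ν.support ⊆ S ∧ ∀ j, Even (ν j)) :
    ∑ ν ∈ G, multinomialTerm b (n + 2) ν ≤ ((n : ℝ) + 2) ^ 2 * T ^ n * B := by
  classical
  have hsplit (ν : G) : ∃ j ∈ ν.1.support, ∃ ρ, ν.1 = ρ + Finsupp.single j 2 := by
    refine Finsupp.exists_eq_add_single_two (fun h0 => ?_) (hG ν ν.2).2.2
    simpa [h0] using (hG ν ν.2).1
  choose j hj ρ hρ using hsplit
  have hjS : ↑(G.attach.image j) ⊆ S := by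
    intro k hk
    obtain ⟨ν, -, rfl⟩ := mem_image.1 hk
    exact (hG ν ν.2).2.1 (hj ν)
  have hρG : ∀ r ∈ G.attach.image ρ, r.degree = n ∧ ↑r.support ⊆ S := by
    intro r hr
    obtain ⟨ν, -, rfl⟩ := mem_image.1 hr
    have hdeg := (hG ν ν.2).1
    rw [hρ ν, map_add, Finsupp.degree_single] at hdeg
    exact ⟨by omega, fun i hi => (hG ν ν.2).2.1 (hρ ν ▸ Finsupp.support_mono le_self_add hi)⟩
  have hinj : Set.InjOn (fun ν => (j ν, ρ ν)) G.attach := fun ν _ μ _ h => by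
    simp only [Prod.mk.injEq] at h
    exact Subtype.ext ((hρ ν).trans (h.1 ▸ h.2 ▸ (hρ μ).symm))
  have hB0 : 0 ≤ B := by simpa using hB ∅ (by simp)
  calc ∑ ν ∈ G, multinomialTerm b (n + 2) ν
      = ∑ ν ∈ G.attach, multinomialTerm b (n + 2) (ρ ν + Finsupp.single (j ν) 2) := by
        rw [← sum_attach]
        exact sum_congr rfl fun ν _ => by rw [← hρ ν]
    _ ≤ ∑ ν ∈ G.attach, ((n : ℝ) + 2) ^ 2 * (b (j ν) ^ 2 * multinomialTerm b n (ρ ν)) :=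
        sum_le_sum fun ν _ => multinomialTerm_add_single_two_le hb n (ρ ν) (j ν)
    _ = ((n : ℝ) + 2) ^ 2 * ∑ ν ∈ G.attach, b (j ν) ^ 2 * multinomialTerm b n (ρ ν) :=
        (mul_sum _ _ _).symm
    _ ≤ ((n : ℝ) + 2) ^ 2 * ((∑ k ∈ G.attach.image j, b k ^ 2) *
          ∑ r ∈ G.attach.image ρ, multinomialTerm b n r) :=
        mul_le_mul_of_nonneg_left (sum_mul_le_sum_image_mul_sum_image hinj (fun k => sq_nonneg _)
          (multinomialTerm_nonneg hb n)) (by positivity)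
    _ ≤ ((n : ℝ) + 2) ^ 2 * (B * T ^ n) :=
        mul_le_mul_of_nonneg_left (mul_le_mul (hB _ hjS) (sum_multinomialTerm_le_pow hb hT hρG)
          (sum_nonneg fun r _ => multinomialTerm_nonneg hb n r) hB0) (by positivity)
    _ = ((n : ℝ) + 2) ^ 2 * T ^ n * B := by ring

lemma tsum_even_multinomialTerm_le (hb : ∀ j, 0 ≤ b j) {S : Set α} {T B : ℝ}
    (hT : ∀ F : Finset α, ↑F ⊆ S → ∑ j ∈ F, b j ≤ T)
    (hB : ∀ F : Finset α, ↑F ⊆ S → ∑ j ∈ F, b j ^ 2 ≤ B) {n : ℕ} (P : (α →₀ ℕ) → Prop)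
    (hP : ∀ ν, P ν → ν.degree = n + 2 ∧ ↑ν.support ⊆ S ∧ ∀ j, Even (ν j)) :
    ∑' ν : {ν // P ν}, multinomialTerm b (n + 2) ν ≤ ((n : ℝ) + 2) ^ 2 * T ^ n * B :=
  Real.tsum_le_of_sum_le (fun ν => multinomialTerm_nonneg hb _ _) fun u =>
    (sum_map u (Function.Embedding.subtype P) _).symm.trans_le <|
      sum_even_multinomialTerm_le hb hT hB fun ν hν => by
        obtain ⟨ν, -, rfl⟩ := mem_map.1 hν
        exact hP ν ν.2

end Multinomial

section Sequence

open Real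

lemma Antitone.add_one_mul_le_tsum {f : ℕ → ℝ} (hf : Antitone f) (h0 : ∀ n, 0 ≤ f n)
    (hsum : Summable f) (n : ℕ) : ((n : ℝ) + 1) * f n ≤ ∑' i, f i :=
  calc ((n : ℝ) + 1) * f n = ∑ _i ∈ range (n + 1), f n := by simp
    _ ≤ ∑ i ∈ range (n + 1), f i :=
        sum_le_sum fun i hi => hf (Nat.lt_succ_iff.1 (mem_range.1 hi))
    _ ≤ ∑' i, f i := hsum.sum_le_tsum _ fun i _ => h0 i

lemma Real.rpow_le_rpow_sub_mul_rpow {x y p q : ℝ} (hx : 0 ≤ x) (hxy : x ≤ y) (hp : 0 ≤ p)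
    (hpq : p ≤ q) : x ^ q ≤ y ^ (q - p) * x ^ p :=
  calc x ^ q = x ^ (q - p) * x ^ p := by
        rw [← rpow_add_of_nonneg hx (sub_nonneg.2 hpq) hp, sub_add_cancel]
    _ ≤ y ^ (q - p) * x ^ p := by gcongr

lemma Antitone.summable_of_summable_rpow {b : ℕ → ℝ} (hanti : Antitone b) (hb : ∀ n, 0 ≤ b n)
    {p : ℝ} (hp : 0 ≤ p) (hp1 : p ≤ 1) (hsum : Summable fun n => b n ^ p) : Summable b :=
  (hsum.mul_left (b 0 ^ (1 - p))).of_nonneg_of_le hb fun n => by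
    simpa using rpow_le_rpow_sub_mul_rpow (hb n) (hanti (Nat.zero_le n)) hp hp1

lemma sum_le_tsum_nat_add {f : ℕ → ℝ} (hf : ∀ n, 0 ≤ f n) (hsum : Summable f) {s : ℕ}
    {F : Finset ℕ} (hF : ↑F ⊆ Set.Ici s) : ∑ j ∈ F, f j ≤ ∑' n, f (n + s) := by
  rw [← sum_preimage (· + s) F (add_left_injective s).injOn f fun j hj hnot =>
    (hnot ⟨j - s, Nat.sub_add_cancel (hF hj)⟩).elim]
  exact ((summable_nat_add_iff s).2 hsum).sum_le_tsum _ fun n _ => hf (n + s)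

lemma Antitone.sum_sq_le_of_tsum_rpow_le {b : ℕ → ℝ} (hb : ∀ n, 0 ≤ b n) (hanti : Antitone b)
    {p K : ℝ} (hp : 0 < p) (hp2 : p ≤ 2) (hK : 0 < K) (hsum : Summable fun n => b n ^ p)
    (hsumK : ∑' n, b n ^ p ≤ K) {s : ℕ} (hs : 0 < s) {F : Finset ℕ} (hF : ↑F ⊆ Set.Ici s) :
    ∑ j ∈ F, b j ^ 2 ≤ K ^ (2 / p) * (s : ℝ) ^ (-2 / p + 1) := by
  have hs' : (0 : ℝ) < s := by exact_mod_cast hs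
  have hbs : b s ^ p ≤ K / s := by
    have hanti_p : Antitone fun n => b n ^ p := fun n m h => rpow_le_rpow (hb m) (hanti h) hp.le
    have := hanti_p.add_one_mul_le_tsum (fun n => rpow_nonneg (hb n) p) hsum s
    rw [le_div_iff₀ hs']
    nlinarith [rpow_nonneg (hb s) p]
  have hbs' : b s ^ (2 - p) ≤ (K / s) ^ ((2 - p) / p) :=
    calc b s ^ (2 - p) = (b s ^ p) ^ ((2 - p) / p) := by
          rw [← rpow_mul (hb s), mul_div_cancel₀ _ hp.ne']
      _ ≤ (K / s) ^ ((2 - p) / p) :=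
          rpow_le_rpow (rpow_nonneg (hb s) p) hbs (div_nonneg (sub_nonneg.2 hp2) hp.le)
  have hF_p : ∑ j ∈ F, b j ^ p ≤ K :=
    (hsum.sum_le_tsum F fun j _ => rpow_nonneg (hb j) p).trans hsumK
  calc ∑ j ∈ F, b j ^ 2 ≤ ∑ j ∈ F, b s ^ (2 - p) * b j ^ p := sum_le_sum fun j hj => by
        simpa using rpow_le_rpow_sub_mul_rpow (q := 2) (hb j) (hanti (hF hj)) hp.le hp2
    _ = b s ^ (2 - p) * ∑ j ∈ F, b j ^ p := (mul_sum _ _ _).symm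
    _ ≤ (K / s) ^ ((2 - p) / p) * K := mul_le_mul hbs' hF_p
        (sum_nonneg fun j _ => rpow_nonneg (hb j) p) (rpow_nonneg (div_nonneg hK.le hs'.le) _)
    _ = K ^ (2 / p) * (s : ℝ) ^ (-2 / p + 1) := by
        rw [div_rpow hK.le hs'.le, div_mul_eq_mul_div, ← rpow_add_one hK.ne', div_eq_mul_inv,
          ← rpow_neg hs'.le]
        congr 2 <;> field_simp <;> ring

lemma summable_two_mul_add_two_sq_mul_half_pow :
    Summable fun l : ℕ => (((2 * l : ℕ) : ℝ) + 2) ^ 2 * (1 / 2 : ℝ) ^ (2 * l) := by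
  have h := (summable_nat_add_iff 1).2 <|
    summable_pow_mul_geometric_of_norm_lt_one (R := ℝ) 2 (r := 1 / 4) (by norm_num)
  refine (h.mul_left 16).congr fun l => ?_
  rw [pow_mul]
  push_cast
  ring

end Sequence

/-- Dimension-truncation estimate: if `b` is nonincreasing, nonnegative, with
`∑_j b_j^p ≤ K` for some `p ∈ (0,1)`, then there is a constant `C = C(p,K)` such that
for every `s ≥ 1` with `∑_{j≥s+1} b_j ≤ 1/2`,
`∑_{ℓ'≥1} ∑_{|ν|=2ℓ', ν_j=0 ∀ j≤s, ν_j even} ((2ℓ')!/∏ν_j!) ∏ b_j^{ν_j} ≤ C s^{−2/p+1}`.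
Here `b n` stands for `b_{n+1}` of the paper, so `ν_j = 0` for `j ≤ s` becomes
`ν j = 0` for `j < s`, evenness is required for indices `j ≥ s`, and the sum over
`ℓ' ≥ 1` is written as a sum over `ℓ' = l + 1`, `l : ℕ`. -/
theorem stmt10 (p K : ℝ) (hp : 0 < p) (hp1 : p < 1) (hK : 0 < K) :
    ∃ C : ℝ, ∀ b : ℕ → ℝ, (∀ n, 0 ≤ b n) → Antitone b →
      Summable (fun n => b n ^ p) → (∑' n : ℕ, b n ^ p) ≤ K →
      ∀ s : ℕ, 1 ≤ s → (∑' n : ℕ, b (n + s)) ≤ 1 / 2 →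
        (∑' l : ℕ, ∑' ν : {ν : ℕ →₀ ℕ // ν.sum (fun _ n => n) = 2 * (l + 1) ∧
              (∀ j < s, ν j = 0) ∧ ∀ j, s ≤ j → Even (ν j)},
            ((Nat.factorial (2 * (l + 1)) : ℝ) /
                ((ν : ℕ →₀ ℕ).prod fun _ n => (Nat.factorial n : ℝ))) *
              ((ν : ℕ →₀ ℕ).prod fun j n => b j ^ n))
          ≤ C * (s : ℝ) ^ (-2 / p + 1) := by
  refine ⟨K ^ (2 / p) * ∑' l : ℕ, (((2 * l : ℕ) : ℝ) + 2) ^ 2 * (1 / 2 : ℝ) ^ (2 * l), ?_⟩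
  intro b hb hanti hsum hsumK s hs htail
  have hT (F : Finset ℕ) (hF : ↑F ⊆ Set.Ici s) : ∑ j ∈ F, b j ≤ 1 / 2 :=
    (sum_le_tsum_nat_add hb (hanti.summable_of_summable_rpow hb hp.le hp1.le hsum) hF).trans htail
  have hB (F : Finset ℕ) (hF : ↑F ⊆ Set.Ici s) :
      ∑ j ∈ F, b j ^ 2 ≤ K ^ (2 / p) * (s : ℝ) ^ (-2 / p + 1) :=
    hanti.sum_sq_le_of_tsum_rpow_le hb hp (by linarith) hK hsum hsumK hs hF
  have hg := summable_two_mul_add_two_sq_mul_half_pow.mul_right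
    (K ^ (2 / p) * (s : ℝ) ^ (-2 / p + 1))
  calc _ ≤ ∑' l : ℕ, (((2 * l : ℕ) : ℝ) + 2) ^ 2 * (1 / 2 : ℝ) ^ (2 * l) *
        (K ^ (2 / p) * (s : ℝ) ^ (-2 / p + 1)) := by
        refine Summable.tsum_le_tsum ?inner (hg.of_nonneg_of_le
          (fun l => tsum_nonneg fun ν => multinomialTerm_nonneg hb _ _) ?inner) hg
        intro l
        refine tsum_even_multinomialTerm_le hb hT hB (n := 2 * l) _ fun ν hν => ⟨hν.1, ?_, ?_⟩
        · exact fun j hj => le_of_not_gt fun hjs => Finsupp.mem_support_iff.1 hj (hν.2.1 j hjs)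
        · exact fun j => (lt_or_ge j s).elim (fun hjs => hν.2.1 j hjs ▸ Even.zero) (hν.2.2 j)
    _ = _ := by rw [tsum_mul_right]; ring
end

section
/- Let μ be the countable product of the uniform probability measures on [−1/2, 1/2], i.e. the probability measure on [−1/2,1/2]^ℕ with each coordinate y_j independent and uniformly distributed on [−1/2,1/2]. Let (b_j)_{j≥1} be a summable sequence of nonnegative real numbers and let s ≥ 0 be an integer. Then for every integer ℓ ≥ 0, the function y ↦ (Σ_{j≥s+1} b_j y_j)^ℓ is μ-integrable; if ℓ is odd its integral is 0; and if ℓ = 2m is even then 0 ≤ ∫ (Σ_{j≥s+1} b_j y_j)^{2m} dμ(y) ≤ Σ_ν ( (2m)! / ∏_{j≥1} ν_j! ) ∏_{j≥1} b_j^{ν_j}, where the sum is over all finitely supported multi-indices ν with |ν| = 2m, ν_j = 0 for all j ≤ s, and ν_j even for all j ≥ s+1. -/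
/-!
Truncate the series to the coordinates `j ∈ [s, s + k)`. By the multinomial theorem and
independence, `∫ (∑ b_j y_j)^ℓ dμ = ∑_{|ν| = ℓ} (ℓ! / ∏ ν_j!) ∏ b_j^{ν_j} ∏ M(ν_j)` with
`M n = ∫_{-1/2}^{1/2} x^n dx`. Odd moments vanish, so only multi-indices with all entries even
contribute (there are none when `ℓ` is odd), and `0 ≤ M n ≤ 1` bounds each surviving term by
the corresponding term of the series on the right. The truncations are bounded by `∑ b_j`, so
dominated convergence lets `k → ∞`.
-/

open MeasureTheory ProbabilityTheory Filter Finset Topology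

variable {ι : Type*}

noncomputable def uniformIcc : Measure ℝ := volume.restrict (Set.Icc (-(1 / 2)) (1 / 2))

noncomputable def uniformMoment (n : ℕ) : ℝ := ∫ x, x ^ n ∂uniformIcc

lemma uniformMoment_eq (n : ℕ) :
    uniformMoment n = ((1 / 2 : ℝ) ^ (n + 1) - (-(1 / 2)) ^ (n + 1)) / (n + 1) := by
  rw [uniformMoment, uniformIcc, integral_Icc_eq_integral_Ioc,
    ← intervalIntegral.integral_of_le (by norm_num), integral_pow]

lemma uniformMoment_of_odd {n : ℕ} (hn : Odd n) : uniformMoment n = 0 := by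
  rw [uniformMoment_eq, hn.add_one.neg_pow, sub_self, zero_div]

lemma uniformMoment_of_even {n : ℕ} (hn : Even n) :
    uniformMoment n = (1 / 2 : ℝ) ^ n / (n + 1) := by
  rw [uniformMoment_eq, hn.add_one.neg_pow, pow_succ]
  ring

lemma uniformMoment_nonneg (n : ℕ) : 0 ≤ uniformMoment n := by
  rcases n.even_or_odd with hn | hn
  · rw [uniformMoment_of_even hn]; positivity
  · rw [uniformMoment_of_odd hn]

lemma uniformMoment_le_one (n : ℕ) : uniformMoment n ≤ 1 := by
  rcases n.even_or_odd with hn | hn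
  · rw [uniformMoment_of_even hn, div_le_one (by positivity)]
    calc (1 / 2 : ℝ) ^ n ≤ 1 := pow_le_one₀ (by norm_num) (by norm_num)
      _ ≤ n + 1 := by linarith [n.cast_nonneg (α := ℝ)]
  · rw [uniformMoment_of_odd hn]; norm_num

lemma finsuppProd_mul_uniformMoment_eq_zero {ν : ι →₀ ℕ} {i : ι} (hi : Odd (ν i))
    (c : ι → ℝ) : (ν.prod fun i k => c i ^ k * uniformMoment k) = 0 :=
  prod_eq_zero (Finsupp.mem_support_iff.2 hi.pos.ne')
    (by simp only [uniformMoment_of_odd hi, mul_zero])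

lemma Finsupp.multinomial_eq_factorial_div {K : Type*} [Field K] [CharZero K]
    (ν : ι →₀ ℕ) :
    (ν.multinomial : K) =
      ((ν.sum fun _ k => k).factorial : K) / ν.prod fun _ k => (k.factorial : K) := by
  rw [eq_div_iff (by simp [Finsupp.prod, Finset.prod_ne_zero_iff, Nat.factorial_ne_zero]),
    mul_comm, Finsupp.multinomial_eq]
  exact_mod_cast Nat.multinomial_spec ν.support ν

lemma Finset.sum_pow_eq_sum_finsuppAntidiag {R : Type*} [DecidableEq ι] [CommSemiring R]
    (s : Finset ι) (f : ι → R) (n : ℕ) :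
    (∑ i ∈ s, f i) ^ n =
      ∑ ν ∈ s.finsuppAntidiag n, (ν.multinomial : R) * ν.prod fun i k => f i ^ k := by
  rw [sum_pow_eq_sum_piAntidiag]
  symm
  refine sum_bij (fun ν _ => ⇑ν) (fun ν hν => ?_) (fun _ _ _ _ h => DFunLike.coe_injective h)
    (fun f hf => ?_) (fun ν hν => ?_)
  · simpa [mem_piAntidiag, mem_finsuppAntidiag, subset_iff] using hν
  · have hsupp := (mem_piAntidiag.1 hf).2
    exact ⟨Finsupp.onFinset s f hsupp,
      mem_finsuppAntidiag.2 ⟨(mem_piAntidiag.1 hf).1, Finsupp.support_onFinset_subset⟩, rfl⟩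
  · have hsupp := (mem_finsuppAntidiag.1 hν).2
    rw [Finsupp.multinomial_eq_of_support_subset hsupp,
      Finsupp.prod_of_support_subset _ hsupp _ fun _ _ => pow_zero _]

lemma multinomial_mul_prod_pow_nonneg {b : ι → ℝ} (hb : 0 ≤ b) (ν : ι →₀ ℕ) :
    0 ≤ (ν.multinomial : ℝ) * ν.prod fun i k => b i ^ k :=
  mul_nonneg ν.multinomial.cast_nonneg (prod_nonneg fun i _ => pow_nonneg (hb i) _)

lemma summable_multinomial_mul_prod_pow {b : ι → ℝ} (hb : 0 ≤ b) (hsum : Summable b) {n : ℕ}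
    {P : (ι →₀ ℕ) → Prop} (hP : ∀ ν, P ν → (ν.sum fun _ k => k) = n) :
    Summable fun ν : {ν // P ν} => (ν.1.multinomial : ℝ) * ν.1.prod fun i k => b i ^ k := by
  classical
  refine summable_of_sum_le (fun ν => multinomial_mul_prod_pow_nonneg hb ν.1)
    (c := (∑' i, b i) ^ n) fun u => ?_
  set t := u.biUnion fun ν => ν.1.support
  have hsub : u.map (Function.Embedding.subtype P) ⊆ t.finsuppAntidiag n := by
    intro ν hν
    obtain ⟨ν, hνu, rfl⟩ := mem_map.1 hν
    rw [mem_finsuppAntidiag']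
    exact ⟨hP _ ν.2, subset_biUnion_of_mem (fun ν : {ν // P ν} => ν.1.support) hνu⟩
  calc ∑ ν ∈ u, (ν.1.multinomial : ℝ) * ν.1.prod (fun i k => b i ^ k)
      = ∑ ν ∈ u.map (Function.Embedding.subtype P),
          (ν.multinomial : ℝ) * ν.prod (fun i k => b i ^ k) := by rw [sum_map]; rfl
    _ ≤ ∑ ν ∈ t.finsuppAntidiag n, (ν.multinomial : ℝ) * ν.prod (fun i k => b i ^ k) :=
      sum_le_sum_of_subset_of_nonneg hsub fun ν _ _ => multinomial_mul_prod_pow_nonneg hb ν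
    _ = (∑ i ∈ t, b i) ^ n := (sum_pow_eq_sum_finsuppAntidiag _ _ _).symm
    _ ≤ (∑' i, b i) ^ n :=
      pow_le_pow_left₀ (sum_nonneg fun i _ => hb i) (hsum.sum_le_tsum _ fun i _ => hb i) n

open Classical in
lemma sum_even_finsuppAntidiag_le_tsum {b : ℕ → ℝ} (hb : 0 ≤ b) (hsum : Summable b)
    {s n : ℕ} {t : Finset ℕ} (ht : ∀ j ∈ t, s ≤ j) :
    ∑ ν ∈ t.finsuppAntidiag n with ∀ j, Even (ν j),
        (ν.multinomial : ℝ) * ν.prod (fun j k => b j ^ k) ≤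
      ∑' ν : {ν : ℕ →₀ ℕ // ν.sum (fun _ k => k) = n ∧
          (∀ j < s, ν j = 0) ∧ ∀ j, s ≤ j → Even (ν j)},
        (n.factorial : ℝ) / (ν.1.prod fun _ k => (k.factorial : ℝ)) *
          ν.1.prod fun j k => b j ^ k := by
  refine le_of_le_of_eq (?_ : _ ≤ ∑' ν, (ν.1.multinomial : ℝ) * ν.1.prod fun j k => b j ^ k)
    (tsum_congr fun ν => by rw [Finsupp.multinomial_eq_factorial_div, ν.2.1])
  refine (sum_subtype_of_mem _ fun ν hν => ?_).symm.trans_le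
    ((summable_multinomial_mul_prod_pow hb hsum fun ν hν => hν.1).sum_le_tsum _
      fun ν _ => multinomial_mul_prod_pow_nonneg hb ν.1)
  obtain ⟨hν, heven⟩ := mem_filter.1 hν
  obtain ⟨hdeg, hsupp⟩ := mem_finsuppAntidiag'.1 hν
  refine ⟨hdeg, fun j hj => Finsupp.notMem_support_iff.1 fun hj' => ?_, fun j _ => heven j⟩
  exact absurd (ht j (hsupp hj')) (not_le.2 hj)

section UniformLaw

variable {Ω : Type*} [MeasurableSpace Ω] {μ : Measure Ω}

lemma aemeasurable_of_map_eq_uniformIcc {Y : Ω → ℝ}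
    (hY : μ.map Y = uniformIcc) : AEMeasurable Y μ :=
  .of_map_ne_zero (by simp [hY, uniformIcc])

lemma ae_abs_le_of_map_eq_uniformIcc {Y : Ω → ℝ}
    (hY : μ.map Y = uniformIcc) :
    ∀ᵐ ω ∂μ, |Y ω| ≤ 1 / 2 := by
  refine ae_of_ae_map (p := fun x => |x| ≤ 1 / 2) (aemeasurable_of_map_eq_uniformIcc hY) ?_
  rw [hY]
  filter_upwards [ae_restrict_mem measurableSet_Icc] with x hx using abs_le.2 hx

lemma integral_pow_of_map_eq_uniformIcc {Y : Ω → ℝ}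
    (hY : μ.map Y = uniformIcc) (n : ℕ) :
    ∫ ω, Y ω ^ n ∂μ = uniformMoment n := by
  rw [← integral_map (aemeasurable_of_map_eq_uniformIcc hY)
    (continuous_pow n).aestronglyMeasurable, hY, uniformMoment]

variable {X : ι → Ω → ℝ}

lemma integrable_finsuppProd_pow [IsFiniteMeasure μ]
    (hX : ∀ i, μ.map (X i) = uniformIcc) (ν : ι →₀ ℕ) :
    Integrable (fun ω => ν.prod fun i k => X i ω ^ k) μ := by
  refine .of_bound (Finset.aestronglyMeasurable_fun_prod _ fun i _ =>
    ((aemeasurable_of_map_eq_uniformIcc (hX i)).pow_const _).aestronglyMeasurable) 1 ?_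
  filter_upwards [(eventually_all_finset ν.support).2 fun i _ =>
    ae_abs_le_of_map_eq_uniformIcc (hX i)] with ω hω
  rw [Real.norm_eq_abs, Finsupp.prod, abs_prod]
  refine prod_le_one (fun _ _ => abs_nonneg _) fun i hi => ?_
  rw [abs_pow]
  exact pow_le_one₀ (abs_nonneg _) ((hω i hi).trans (by norm_num))

lemma integral_finsuppProd_pow (hindep : iIndepFun X μ)
    (hX : ∀ i, μ.map (X i) = uniformIcc) (ν : ι →₀ ℕ) :
    ∫ ω, (ν.prod fun i k => X i ω ^ k) ∂μ = ν.prod fun _ k => uniformMoment k := by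
  have hsupp : iIndepFun (fun i : ν.support => X i) μ := hindep.precomp Subtype.val_injective
  have h := hsupp.integral_fun_prod_comp (f := fun (i : ν.support) (x : ℝ) => x ^ ν i)
    (fun i => aemeasurable_of_map_eq_uniformIcc (hX i))
    (fun i => (continuous_pow _).aestronglyMeasurable)
  simp only [integral_pow_of_map_eq_uniformIcc (hX _)] at h
  simp only [Finsupp.prod, ← Finset.prod_coe_sort ν.support]
  exact h

lemma integral_sum_mul_pow [DecidableEq ι] (hindep : iIndepFun X μ)
    (hX : ∀ i, μ.map (X i) = uniformIcc)
    (t : Finset ι) (c : ι → ℝ) (l : ℕ) :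
    ∫ ω, (∑ i ∈ t, c i * X i ω) ^ l ∂μ =
      ∑ ν ∈ t.finsuppAntidiag l,
        (ν.multinomial : ℝ) * ν.prod fun i k => c i ^ k * uniformMoment k := by
  have := hindep.isProbabilityMeasure
  simp_rw [sum_pow_eq_sum_finsuppAntidiag, mul_pow, Finsupp.prod_mul]
  rw [integral_finsetSum _ fun ν _ => ((integrable_finsuppProd_pow hX ν).const_mul _).const_mul _]
  refine sum_congr rfl fun ν _ => ?_
  rw [integral_const_mul, integral_const_mul, integral_finsuppProd_pow hindep hX]

lemma integral_sum_mul_pow_of_odd [DecidableEq ι] (hindep : iIndepFun X μ)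
    (hX : ∀ i, μ.map (X i) = uniformIcc)
    (t : Finset ι) (c : ι → ℝ) {l : ℕ} (hl : Odd l) :
    ∫ ω, (∑ i ∈ t, c i * X i ω) ^ l ∂μ = 0 := by
  rw [integral_sum_mul_pow hindep hX]
  refine sum_eq_zero fun ν hν => ?_
  obtain ⟨i, hi⟩ : ∃ i, Odd (ν i) := by
    by_contra! heven
    have : Even (ν.sum fun _ k => k) := even_sum _ fun i _ => Nat.not_odd_iff_even.1 (heven i)
    rw [(mem_finsuppAntidiag'.1 hν).1] at this
    exact Nat.not_even_iff_odd.2 hl this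
  rw [finsuppProd_mul_uniformMoment_eq_zero hi, mul_zero]

open Classical in
lemma integral_sum_mul_pow_le [DecidableEq ι] (hindep : iIndepFun X μ)
    (hX : ∀ i, μ.map (X i) = uniformIcc)
    (t : Finset ι) {c : ι → ℝ} (hc : 0 ≤ c) (l : ℕ) :
    ∫ ω, (∑ i ∈ t, c i * X i ω) ^ l ∂μ ≤
      ∑ ν ∈ t.finsuppAntidiag l with ∀ i, Even (ν i),
        (ν.multinomial : ℝ) * ν.prod fun i k => c i ^ k := by
  rw [integral_sum_mul_pow hindep hX, ← sum_filter_of_ne (p := fun ν => ∀ i, Even (ν i))]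
  · refine sum_le_sum fun ν _ => mul_le_mul_of_nonneg_left ?_ ν.multinomial.cast_nonneg
    refine prod_le_prod (fun i _ => ?_) fun i _ => ?_
    · exact mul_nonneg (pow_nonneg (hc i) _) (uniformMoment_nonneg _)
    · exact mul_le_of_le_one_right (pow_nonneg (hc i) _) (uniformMoment_le_one _)
  · intro ν _ hne i
    by_contra hodd
    rw [finsuppProd_mul_uniformMoment_eq_zero (Nat.not_even_iff_odd.1 hodd), mul_zero] at hne
    exact hne rfl

end UniformLaw

section TailSeries

variable {c : ℕ → ℝ}

lemma summable_mul_of_abs_le_one (hc : Summable c) {y : ℕ → ℝ} (hy : ∀ n, |y n| ≤ 1) :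
    Summable fun n => c n * y n :=
  hc.abs.of_norm_bounded fun n => by
    rw [Real.norm_eq_abs, abs_mul]
    exact mul_le_of_le_one_right (abs_nonneg _) (hy n)

lemma abs_sum_range_mul_le (hc : Summable c) {y : ℕ → ℝ} (hy : ∀ n, |y n| ≤ 1) (k : ℕ) :
    |∑ n ∈ range k, c n * y n| ≤ ∑' n, |c n| :=
  calc |∑ n ∈ range k, c n * y n| ≤ ∑ n ∈ range k, |c n * y n| := abs_sum_le_sum_abs _ _
    _ ≤ ∑ n ∈ range k, |c n| := sum_le_sum fun n _ => by
      rw [abs_mul]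
      exact mul_le_of_le_one_right (abs_nonneg _) (hy n)
    _ ≤ ∑' n, |c n| := hc.abs.sum_le_tsum _ fun n _ => abs_nonneg _

lemma abs_tsum_mul_le (hc : Summable c) {y : ℕ → ℝ} (hy : ∀ n, |y n| ≤ 1) :
    |∑' n, c n * y n| ≤ ∑' n, |c n| :=
  le_of_tendsto' (summable_mul_of_abs_le_one hc hy).hasSum.tendsto_sum_nat.abs
    (abs_sum_range_mul_le hc hy)

variable {Ω : Type*} [MeasurableSpace Ω] {μ : Measure Ω} {Y : ℕ → Ω → ℝ}

lemma ae_tendsto_sum_range_mul_pow (hc : Summable c) (hY : ∀ᵐ ω ∂μ, ∀ n, |Y n ω| ≤ 1)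
    (l : ℕ) :
    ∀ᵐ ω ∂μ, Tendsto (fun k => (∑ n ∈ range k, c n * Y n ω) ^ l) atTop
      (𝓝 ((∑' n, c n * Y n ω) ^ l)) := by
  filter_upwards [hY] with ω hω
  exact (summable_mul_of_abs_le_one hc hω).hasSum.tendsto_sum_nat.pow l

lemma ae_abs_sum_range_mul_pow_le (hc : Summable c) (hY : ∀ᵐ ω ∂μ, ∀ n, |Y n ω| ≤ 1)
    (l k : ℕ) :
    ∀ᵐ ω ∂μ, ‖(∑ n ∈ range k, c n * Y n ω) ^ l‖ ≤ (∑' n, |c n|) ^ l := by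
  filter_upwards [hY] with ω hω
  rw [Real.norm_eq_abs, abs_pow]
  exact pow_le_pow_left₀ (abs_nonneg _) (abs_sum_range_mul_le hc hω k) l

variable [IsFiniteMeasure μ]

lemma integrable_tsum_mul_pow (hc : Summable c) (hmeas : ∀ n, AEStronglyMeasurable (Y n) μ)
    (hY : ∀ᵐ ω ∂μ, ∀ n, |Y n ω| ≤ 1) (l : ℕ) :
    Integrable (fun ω => (∑' n, c n * Y n ω) ^ l) μ := by
  refine .of_bound (aestronglyMeasurable_of_tendsto_ae atTop (fun k => by fun_prop)
    (ae_tendsto_sum_range_mul_pow hc hY l)) ((∑' n, |c n|) ^ l) ?_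
  filter_upwards [hY] with ω hω
  rw [Real.norm_eq_abs, abs_pow]
  exact pow_le_pow_left₀ (abs_nonneg _) (abs_tsum_mul_le hc hω) l

lemma tendsto_integral_sum_range_mul_pow (hc : Summable c)
    (hmeas : ∀ n, AEStronglyMeasurable (Y n) μ) (hY : ∀ᵐ ω ∂μ, ∀ n, |Y n ω| ≤ 1)
    (l : ℕ) :
    Tendsto (fun k => ∫ ω, (∑ n ∈ range k, c n * Y n ω) ^ l ∂μ) atTop
      (𝓝 (∫ ω, (∑' n, c n * Y n ω) ^ l ∂μ)) :=
  tendsto_integral_of_dominated_convergence _ (fun k => by fun_prop) (integrable_const _)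
    (ae_abs_sum_range_mul_pow_le hc hY l) (ae_tendsto_sum_range_mul_pow hc hY l)

end TailSeries

/-- Moment computation under the countable product of uniform measures on `[−1/2,1/2]`:
`μ` is a probability measure on the sequence space whose coordinates are independent
and uniformly distributed on `[−1/2,1/2]` (the uniform distribution on `[−1/2,1/2]`
being Lebesgue measure restricted to it, which has total mass one).
For a summable nonnegative `b` (here `b n` stands for `b_{n+1}` of the paper),
the function `y ↦ (∑_{j≥s+1} b_j y_j)^ℓ` is `μ`-integrable, its integral vanishes for
odd `ℓ`, and for `ℓ = 2m` the integral lies between `0` and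
`∑_{|ν|=2m, ν_j=0 ∀ j≤s, ν_j even} ((2m)!/∏ν_j!) ∏ b_j^{ν_j}`. -/
theorem stmt11 (μ : Measure (ℕ → ℝ)) [IsProbabilityMeasure μ]
    (hIndep : iIndepFun
      (fun j => fun y : ℕ → ℝ => y j) μ)
    (hUnif : ∀ j : ℕ, μ.map (fun y : ℕ → ℝ => y j) =
      volume.restrict (Set.Icc (-(1 / 2) : ℝ) (1 / 2)))
    (b : ℕ → ℝ) (hb : ∀ n, 0 ≤ b n) (hsum : Summable b) (s : ℕ) (l : ℕ) :
    Integrable (fun y : ℕ → ℝ => (∑' n : ℕ, b (n + s) * y (n + s)) ^ l) μ ∧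
    (Odd l → ∫ y : ℕ → ℝ, (∑' n : ℕ, b (n + s) * y (n + s)) ^ l ∂μ = 0) ∧
    (∀ m : ℕ, l = 2 * m →
      0 ≤ ∫ y : ℕ → ℝ, (∑' n : ℕ, b (n + s) * y (n + s)) ^ l ∂μ ∧
      ∫ y : ℕ → ℝ, (∑' n : ℕ, b (n + s) * y (n + s)) ^ l ∂μ ≤
        ∑' ν : {ν : ℕ →₀ ℕ // ν.sum (fun _ n => n) = 2 * m ∧
            (∀ j < s, ν j = 0) ∧ ∀ j, s ≤ j → Even (ν j)},
          ((Nat.factorial (2 * m) : ℝ) /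
              ((ν : ℕ →₀ ℕ).prod fun _ n => (Nat.factorial n : ℝ))) *
            ((ν : ℕ →₀ ℕ).prod fun j n => b j ^ n)) := by
  have hbdd : ∀ᵐ y ∂μ, ∀ n, |y (n + s)| ≤ 1 := by
    filter_upwards [ae_all_iff.2 fun j => ae_abs_le_of_map_eq_uniformIcc (hUnif j)] with y hy n
    linarith [hy (n + s)]
  have hsum' : Summable fun n => b (n + s) := (summable_nat_add_iff s).2 hsum
  have hmeas : ∀ n, AEStronglyMeasurable (fun y : ℕ → ℝ => y (n + s)) μ := fun n =>
    (measurable_pi_apply _).aestronglyMeasurable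
  have hlim := tendsto_integral_sum_range_mul_pow hsum' hmeas hbdd l
  have hpartial (k : ℕ) (y : ℕ → ℝ) :
      ∑ n ∈ range k, b (n + s) * y (n + s) = ∑ j ∈ Ico s (s + k), b j * y j := by
    rw [sum_Ico_eq_sum_range, Nat.add_sub_cancel_left]
    simp_rw [add_comm s]
  simp_rw [hpartial] at hlim
  refine ⟨integrable_tsum_mul_pow hsum' hmeas hbdd l, fun hl => ?_, fun m hm => ⟨?_, ?_⟩⟩
  · simp_rw [integral_sum_mul_pow_of_odd hIndep hUnif _ _ hl] at hlim
    exact tendsto_nhds_unique hlim tendsto_const_nhds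
  · exact integral_nonneg fun y => by rw [hm, pow_mul]; positivity
  · subst hm
    exact le_of_tendsto' hlim fun k => (integral_sum_mul_pow_le hIndep hUnif _ hb _).trans
      (sum_even_finsuppAntidiag_le_tsum hb hsum fun j hj => (mem_Ico.1 hj).1)
end
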